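/- arXiv:1804.11302 — 8 statements merged into one kernel-verified Lean document; each statement's English description precedes it below -/
import Mathlib

section
/- For all integers s ≥ 3 and t with s+2 ≤ t ≤ 2s-1, we have η > 0, where η = 2(1-α_{s,t}) - δ and δ = s - (2s-1)α_{s,t}. -/
/-- The pair `(s,t)` is regular if `s ≥ 11` and `s+3 ≤ t ≤ 2s-4`, or if
`(s,t) ∈ {(10,14),(10,15)}`. -/
def IsRegularPair (s t : ℕ) : Prop :=
  (11 ≤ s ∧ s + 3 ≤ t ∧ t ≤ 2 * s - 4) ∨ (s = 10 ∧ t = 14) ∨ (s = 10 ∧ t = 15)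

open Classical in
/-- The exponent `α = α_{s,t}`. -/
noncomputable def ERalpha (s t : ℕ) : ℝ :=
  if IsRegularPair s t then
    (((s : ℝ) - 2) * ((t : ℝ) - (s : ℝ)) * ((t : ℝ) + (s : ℝ) - 1) + 2 * (t : ℝ) - 2 * (s : ℝ)) /
      ((2 * (s : ℝ) - 3) * ((t : ℝ) - (s : ℝ)) * ((t : ℝ) + (s : ℝ) - 1) - 2 * (s : ℝ) + 4)
  else
    (((s : ℝ) - 2) * ((t : ℝ) - (s : ℝ)) * ((s : ℝ) - 1) + (s : ℝ) - 1) /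
      ((2 * (s : ℝ) - 3) * ((t : ℝ) - (s : ℝ)) * ((s : ℝ) - 1) + 2 * (s : ℝ) - (t : ℝ))

/-- `δ = s - (2s-1)α`. -/
noncomputable def ERdelta (s t : ℕ) : ℝ := (s : ℝ) - (2 * (s : ℝ) - 1) * ERalpha s t

/-- `η = 2(1-α) - δ`. -/
noncomputable def EReta (s t : ℕ) : ℝ := 2 * (1 - ERalpha s t) - ERdelta s t

/-!
Since `η = (2s-3)α - (s-2)`, positivity of `η` says `α > (s-2)/(2s-3)`. Both formulas for `α`
are of the form `num / den` with `den > 0`, and clearing denominators leaves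
`(2s-3)·num - (s-2)·den`, which is `2(2s-3)(t-s) + 2(s-2)²` in the regular case and
`(2s-3)(s-1) - (s-2)(2s-t)` in the exceptional case: the leading cubic terms cancel.
-/

theorem EReta_eq (s t : ℕ) : EReta s t = (2 * (s : ℝ) - 3) * ERalpha s t - ((s : ℝ) - 2) := by
  unfold EReta ERdelta
  ring

theorem mul_div_sub_pos {b c n d : ℝ} (hd : 0 < d) (h : b * d < c * n) :
    0 < c * (n / d) - b := by
  rw [mul_div_assoc', sub_pos, lt_div_iff₀ hd]
  exact h

theorem regular_formula_gt {S T : ℝ} (hS : 2 ≤ S) (hST : S + 2 ≤ T) :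
    0 < (2 * S - 3) *
        (((S - 2) * (T - S) * (T + S - 1) + 2 * T - 2 * S) /
          ((2 * S - 3) * (T - S) * (T + S - 1) - 2 * S + 4)) - (S - 2) := by
  have hden : 0 < (2 * S - 3) * (T - S) * (T + S - 1) - 2 * S + 4 := by
    have : 2 * (2 * S + 1) ≤ (T - S) * (T + S - 1) := by nlinarith
    nlinarith
  refine mul_div_sub_pos hden ?_
  nlinarith [sq_nonneg (S - 2)]

theorem exceptional_formula_gt {S T : ℝ} (hS : 2 ≤ S) (hST : S < T) (hT : T < 2 * S) :
    0 < (2 * S - 3) *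
        (((S - 2) * (T - S) * (S - 1) + S - 1) /
          ((2 * S - 3) * (T - S) * (S - 1) + 2 * S - T)) - (S - 2) := by
  have hden : 0 < (2 * S - 3) * (T - S) * (S - 1) + 2 * S - T := by
    have : 0 ≤ (2 * S - 3) * (T - S) * (S - 1) := by
      apply mul_nonneg (mul_nonneg _ _) <;> linarith
    linarith
  refine mul_div_sub_pos hden ?_
  nlinarith [mul_nonneg (by linarith : 0 ≤ S - 2) (by linarith : 0 ≤ T - S)]

/-- For all integers `s ≥ 3` and `s+2 ≤ t ≤ 2s-1`, we have `η > 0`, where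
`η = 2(1-α) - δ` and `δ = s - (2s-1)α`. -/
theorem EReta_pos (s t : ℕ) (hs : 3 ≤ s) (ht1 : s + 2 ≤ t) (ht2 : t ≤ 2 * s - 1) :
    0 < EReta s t := by
  have hS : (2 : ℝ) ≤ s := by exact_mod_cast (by omega : 2 ≤ s)
  have hST : (s : ℝ) + 2 ≤ t := by exact_mod_cast ht1
  have hT : (t : ℝ) < 2 * s := by exact_mod_cast (by omega : t < 2 * s)
  rw [EReta_eq, ERalpha]
  split_ifs
  · exact regular_formula_gt hS hST
  · exact exceptional_formula_gt hS (by linarith) hT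
end

section
/- Let s ≥ 3 and s+2 ≤ t ≤ 2s-1 be integers. If Q is a colour scheme for K_t with parameter s that has a block of size exactly s, then v(Q) ≤ 0. -/
/-- A colour scheme for `K_t` with parameter `s`: a set of `t` nodes together with a
family of blocks (colours), each of size at least `2` and at most `s`, such that every
pair of distinct nodes is contained in exactly one block. -/
structure ColourScheme (s t : ℕ) where
  blocks : Finset (Finset (Fin t))
  two_le_card : ∀ D ∈ blocks, 2 ≤ D.card
  card_le_s : ∀ D ∈ blocks, D.card ≤ s
  existsUnique_block : ∀ x y : Fin t, x ≠ y → ∃! D, D ∈ blocks ∧ x ∈ D ∧ y ∈ D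

/-- The value `v(Q) = t - 2 + (b-1)δ + (l-2)(α-1)` of a scheme, where `b` is the number
of blocks and `l` the number of labels. -/
noncomputable def schemeValue {s t : ℕ} (Q : ColourScheme s t) : ℝ :=
  (t : ℝ) - 2 + ((Q.blocks.card : ℝ) - 1) * ERdelta s t +
    ((∑ D ∈ Q.blocks, (D.card : ℝ)) - 2) * (ERalpha s t - 1)

lemma e1_mid (S M : ℝ) (hM2 : 2 ≤ M) (hl : M + 1 ≤ S) (hr : S ≤ M + 3) :
    S^2*M - 2*S^2 - S*M^2 - 3*S*M + 6*S + 2*M^2 + M - 4 ≤ 0 := by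
  nlinarith [mul_nonneg (by linarith : (0:ℝ) ≤ S - M - 1) (by linarith : (0:ℝ) ≤ M + 3 - S),
    mul_nonneg (mul_nonneg (by linarith : (0:ℝ) ≤ S - M - 1) (by linarith : (0:ℝ) ≤ M + 3 - S)) (by linarith : (0:ℝ) ≤ M - 2),
    sq_nonneg (S - M - 2), mul_nonneg (by linarith : (0:ℝ) ≤ M - 2) (by linarith : (0:ℝ) ≤ S)]

lemma e1_exc (s t : ℕ) (hs : 3 ≤ s) (ht1 : s + 2 ≤ t) (ht2 : t ≤ 2 * s - 1)
    (h : ¬ IsRegularPair s t) :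
    ((s:ℝ))^2*((t:ℝ)-(s:ℝ)) - 2*(s:ℝ)^2 - (s:ℝ)*((t:ℝ)-(s:ℝ))^2 - 3*(s:ℝ)*((t:ℝ)-(s:ℝ))
      + 6*(s:ℝ) + 2*((t:ℝ)-(s:ℝ))^2 + ((t:ℝ)-(s:ℝ)) - 4 ≤ 0 := by
  rcases le_or_gt s 10 with hle | hgt
  · -- finite check
    interval_cases s <;> interval_cases t <;>
      first
        | (push_cast; norm_num; done)
        | (exact absurd (by unfold IsRegularPair; norm_num) h)
  · -- s ≥ 11 : from not regular, t = s+2 or t ≥ 2s-3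
    have h' : t = s + 2 ∨ 2 * s - 3 ≤ t := by
      by_contra hc
      push_neg at hc
      exact h (Or.inl ⟨hgt, by omega, by omega⟩)
    have hS : (11:ℝ) ≤ (s:ℝ) := by exact_mod_cast hgt
    rcases h' with rfl | hge
    · push_cast; nlinarith
    · have hts : (2*(s:ℝ) - 3) ≤ (t:ℝ) := by
        have : ((2*s-3 : ℕ) : ℝ) ≤ (t:ℝ) := by exact_mod_cast hge
        push_cast [Nat.cast_sub (by omega : 3 ≤ 2*s)] at this
        linarith
      have hM2 : (2:ℝ) ≤ (t:ℝ) - (s:ℝ) := by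
        have : ((s+2 : ℕ):ℝ) ≤ (t:ℝ) := by exact_mod_cast ht1
        push_cast at this; linarith
      have hl : ((t:ℝ)-(s:ℝ)) + 1 ≤ (s:ℝ) := by
        have : (t:ℝ) ≤ 2*(s:ℝ) - 1 := by
          have : ((t:ℕ):ℝ) ≤ ((2*s-1 : ℕ):ℝ) := by exact_mod_cast ht2
          push_cast [Nat.cast_sub (by omega : 1 ≤ 2*s)] at this
          linarith
        linarith
      have hr : (s:ℝ) ≤ ((t:ℝ)-(s:ℝ)) + 3 := by linarith
      exact e1_mid (s:ℝ) ((t:ℝ)-(s:ℝ)) hM2 hl hr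

lemma r1_poly (S M : ℝ) (h11 : 11 ≤ S) (hM3 : 3 ≤ M) (hSM : M + 4 ≤ S) :
    0 ≤ S^2*M - 2*S^2 - S*M^2 - 3*S*M + 6*S + 2*M^2 + M - 4 := by
  nlinarith [mul_nonneg (by linarith : (0:ℝ) ≤ M - 3) (by linarith : (0:ℝ) ≤ S - M - 4),
    sq_nonneg (S - M - 4), sq_nonneg (M - 3),
    mul_nonneg (mul_nonneg (by linarith : (0:ℝ) ≤ M - 3) (by linarith : (0:ℝ) ≤ S - M - 4)) (by linarith : (0:ℝ) ≤ M - 3),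
    mul_nonneg (mul_nonneg (by linarith : (0:ℝ) ≤ M - 3) (by linarith : (0:ℝ) ≤ S - M - 4)) (by linarith : (0:ℝ) ≤ S - M - 4),
    mul_nonneg (by linarith : (0:ℝ) ≤ M - 3) (by linarith : (0:ℝ) ≤ S - 11),
    mul_nonneg (by linarith : (0:ℝ) ≤ S - M - 4) (by linarith : (0:ℝ) ≤ S - 11)]

lemma aux_nonneg {x d p : ℝ} (h : x * d = p) (hd : 0 < d) (hp : 0 ≤ p) : 0 ≤ x := by
  nlinarith

lemma aux_nonpos {x d p : ℝ} (h : x * d = p) (hd : 0 < d) (hp : p ≤ 0) : x ≤ 0 := by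
  nlinarith

lemma aux_le {y c : ℝ} (h : 0 ≤ c * y) (hc : 0 < c) : 0 ≤ y := by
  nlinarith

set_option maxHeartbeats 2000000 in
lemma exists_dual (s t : ℕ) (hs : 3 ≤ s) (ht1 : s + 2 ≤ t) (ht2 : t ≤ 2 * s - 1) :
    ∃ lam mu : ℝ,
      (∀ k : ℝ, 1 ≤ k → k ≤ (t : ℝ) - (s : ℝ) →
        ERdelta s t + (k + 1) * (ERalpha s t - 1) ≤ lam * k + mu * (k * (k - 1))) ∧
      (∀ x : ℝ, 2 ≤ x → x ≤ (t : ℝ) - (s : ℝ) →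
        ERdelta s t + x * (ERalpha s t - 1) ≤ mu * (x * (x - 1))) ∧
      ((t : ℝ) - 2 - ERdelta s t - 2 * (ERalpha s t - 1)
        + (ERdelta s t + (s : ℝ) * (ERalpha s t - 1))
        + lam * ((s : ℝ) * ((t : ℝ) - (s : ℝ)))
        + mu * (((t : ℝ) - (s : ℝ)) * ((t : ℝ) - (s : ℝ) - 1)) ≤ 0) := by
  have hS3 : (3:ℝ) ≤ (s:ℝ) := by exact_mod_cast hs
  have hT2 : (s:ℝ) + 2 ≤ (t:ℝ) := by exact_mod_cast ht1
  have hT1 : (t:ℝ) ≤ 2*(s:ℝ) - 1 := by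
    have : ((t:ℕ):ℝ) ≤ ((2*s-1 : ℕ):ℝ) := by exact_mod_cast ht2
    push_cast [Nat.cast_sub (by omega : 1 ≤ 2*s)] at this
    linarith
  by_cases hreg : IsRegularPair s t
  · -- regular case : lam = d+2E, mu = (d+2E)/2
    have hnat : 10 ≤ s ∧ s + 3 ≤ t ∧ t + 4 ≤ 2*s := by
      rcases hreg with ⟨h1,h2,h3⟩|⟨rfl,rfl⟩|⟨rfl,rfl⟩ <;> omega
    have hS10 : (10:ℝ) ≤ (s:ℝ) := by exact_mod_cast hnat.1
    have hT3 : (s:ℝ) + 3 ≤ (t:ℝ) := by exact_mod_cast hnat.2.1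
    have hT4 : (t:ℝ) + 4 ≤ 2*(s:ℝ) := by exact_mod_cast hnat.2.2
    have hden : 0 < (2 * (s : ℝ) - 3) * ((t : ℝ) - (s : ℝ)) * ((t : ℝ) + (s : ℝ) - 1) - 2 * (s : ℝ) + 4 := by
      have h1 : (17:ℝ) ≤ 2*(s:ℝ)-3 := by linarith
      have h2 : (3:ℝ) ≤ (t:ℝ)-(s:ℝ) := by linarith
      have h3 : (22:ℝ) ≤ (t:ℝ)+(s:ℝ)-1 := by linarith
      have k1 : 3*(2*(s:ℝ)-3) ≤ (2*(s:ℝ)-3)*((t:ℝ)-(s:ℝ)) := by nlinarith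
      have k2 : 66*(2*(s:ℝ)-3) ≤ (2*(s:ℝ)-3)*((t:ℝ)-(s:ℝ))*((t:ℝ)+(s:ℝ)-1) := by nlinarith
      linarith
    have halpha : ((2 * (s : ℝ) - 3) * ((t : ℝ) - (s : ℝ)) * ((t : ℝ) + (s : ℝ) - 1) - 2 * (s : ℝ) + 4) * ERalpha s t
        = ((s : ℝ) - 2) * ((t : ℝ) - (s : ℝ)) * ((t : ℝ) + (s : ℝ) - 1) + 2 * (t : ℝ) - 2 * (s : ℝ) := by
      rw [ERalpha, if_pos hreg]
      field_simp
    have hP : 0 ≤ (s:ℝ)^2*((t:ℝ)-(s:ℝ)) - 2*(s:ℝ)^2 - (s:ℝ)*((t:ℝ)-(s:ℝ))^2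
        - 3*(s:ℝ)*((t:ℝ)-(s:ℝ)) + 6*(s:ℝ) + 2*((t:ℝ)-(s:ℝ))^2 + ((t:ℝ)-(s:ℝ)) - 4 := by
      rcases hreg with ⟨h1,h2,h3⟩|⟨rfl,rfl⟩|⟨rfl,rfl⟩
      · refine r1_poly _ _ (by exact_mod_cast h1) ?_ ?_
        · have : ((s+3 : ℕ):ℝ) ≤ (t:ℝ) := by exact_mod_cast h2
          push_cast at this; linarith
        · have : ((t:ℕ):ℝ) ≤ ((2*s-4 : ℕ):ℝ) := by exact_mod_cast h3
          push_cast [Nat.cast_sub (by omega : 4 ≤ 2*s)] at this; linarith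
      · push_cast; norm_num
      · push_cast; norm_num
    have hGle : ERdelta s t + 2*(ERalpha s t - 1) ≤ 0 := by
      have e : (ERdelta s t + 2*(ERalpha s t - 1)) *
          ((2 * (s : ℝ) - 3) * ((t : ℝ) - (s : ℝ)) * ((t : ℝ) + (s : ℝ) - 1) - 2 * (s : ℝ) + 4)
          = -2*(s:ℝ)^2 - 4*(s:ℝ)*((t:ℝ)-(s:ℝ)) + 8*(s:ℝ) + 6*((t:ℝ)-(s:ℝ)) - 8 := by
        rw [ERdelta]
        linear_combination (3 - 2*(s:ℝ)) * halpha
      exact aux_nonpos e hden (by nlinarith)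
    have hR1 : 0 ≤ (ERdelta s t + 2*(ERalpha s t - 1))*((t:ℝ)-(s:ℝ))*(((t:ℝ)-(s:ℝ))+1)
        - 2*(ERdelta s t + (((t:ℝ)-(s:ℝ))+1)*(ERalpha s t - 1)) := by
      have e : ((ERdelta s t + 2*(ERalpha s t - 1))*((t:ℝ)-(s:ℝ))*(((t:ℝ)-(s:ℝ))+1)
          - 2*(ERdelta s t + (((t:ℝ)-(s:ℝ))+1)*(ERalpha s t - 1))) *
          ((2 * (s : ℝ) - 3) * ((t : ℝ) - (s : ℝ)) * ((t : ℝ) + (s : ℝ) - 1) - 2 * (s : ℝ) + 4)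
          = 2*((t:ℝ)-(s:ℝ)-1)*((s:ℝ)^2*((t:ℝ)-(s:ℝ)) - 2*(s:ℝ)^2 - (s:ℝ)*((t:ℝ)-(s:ℝ))^2
            - 3*(s:ℝ)*((t:ℝ)-(s:ℝ)) + 6*(s:ℝ) + 2*((t:ℝ)-(s:ℝ))^2 + ((t:ℝ)-(s:ℝ)) - 4) := by
        rw [ERdelta]
        linear_combination ((3 - 2*(s:ℝ))*((t:ℝ)-(s:ℝ))*(((t:ℝ)-(s:ℝ))+1)
          - 2*((1 - 2*(s:ℝ)) + (((t:ℝ)-(s:ℝ))+1))) * halpha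
      exact aux_nonneg e hden (mul_nonneg (mul_nonneg (by norm_num : (0:ℝ) ≤ 2) (by linarith : (0:ℝ) ≤ (t:ℝ)-(s:ℝ)-1)) hP |>.trans_eq (by ring))
    have hR2 : 0 ≤ (ERdelta s t + 2*(ERalpha s t - 1))*((t:ℝ)-(s:ℝ))*(((t:ℝ)-(s:ℝ))-1)
        - 2*(ERdelta s t + ((t:ℝ)-(s:ℝ))*(ERalpha s t - 1)) := by
      have e : ((ERdelta s t + 2*(ERalpha s t - 1))*((t:ℝ)-(s:ℝ))*(((t:ℝ)-(s:ℝ))-1)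
          - 2*(ERdelta s t + ((t:ℝ)-(s:ℝ))*(ERalpha s t - 1))) *
          ((2 * (s : ℝ) - 3) * ((t : ℝ) - (s : ℝ)) * ((t : ℝ) + (s : ℝ) - 1) - 2 * (s : ℝ) + 4)
          = 2*(((t:ℝ)-(s:ℝ))-1)*(((t:ℝ)-(s:ℝ))-2)*((s:ℝ)-2)*((s:ℝ)-((t:ℝ)-(s:ℝ))) := by
        rw [ERdelta]
        linear_combination ((3 - 2*(s:ℝ))*((t:ℝ)-(s:ℝ))*(((t:ℝ)-(s:ℝ))-1)
          - 2*((1 - 2*(s:ℝ)) + ((t:ℝ)-(s:ℝ)))) * halpha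
      have hq : 0 ≤ 2*(((t:ℝ)-(s:ℝ))-1)*(((t:ℝ)-(s:ℝ))-2)*((s:ℝ)-2)*((s:ℝ)-((t:ℝ)-(s:ℝ))) := by
        have h1 : (0:ℝ) ≤ ((t:ℝ)-(s:ℝ))-1 := by linarith
        have h2 : (0:ℝ) ≤ ((t:ℝ)-(s:ℝ))-2 := by linarith
        have h3 : (0:ℝ) ≤ (s:ℝ)-2 := by linarith
        have h4 : (0:ℝ) ≤ (s:ℝ)-((t:ℝ)-(s:ℝ)) := by linarith
        positivity
      exact aux_nonneg e hden hq
    refine ⟨ERdelta s t + 2*(ERalpha s t - 1), (ERdelta s t + 2*(ERalpha s t - 1))/2, ?_, ?_, ?_⟩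
    · intro k hk1 hkM
      have hM1 : (0:ℝ) < (t:ℝ) - (s:ℝ) - 1 := by linarith
      have h0 : 0 ≤ ((t:ℝ)-(s:ℝ)-1) * ((ERdelta s t + 2*(ERalpha s t - 1)) * k
          + (ERdelta s t + 2*(ERalpha s t - 1))/2 * (k * (k - 1))
          - (ERdelta s t + (k + 1) * (ERalpha s t - 1))) := by
        have key : ((t:ℝ)-(s:ℝ)-1) * ((ERdelta s t + 2*(ERalpha s t - 1)) * k
            + (ERdelta s t + 2*(ERalpha s t - 1))/2 * (k * (k - 1))
            - (ERdelta s t + (k + 1) * (ERalpha s t - 1))) =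
            (k-1)*(((ERdelta s t + 2*(ERalpha s t - 1))*((t:ℝ)-(s:ℝ))*(((t:ℝ)-(s:ℝ))+1)
            - 2*(ERdelta s t + (((t:ℝ)-(s:ℝ))+1)*(ERalpha s t - 1)))/2)
            + (-(ERdelta s t + 2*(ERalpha s t - 1))/2)*(((t:ℝ)-(s:ℝ)-1)*((k-1)*(((t:ℝ)-(s:ℝ))-k))) := by
          ring
        rw [key]
        have h1 : (0:ℝ) ≤ (k-1) := by linarith
        have h2 : (0:ℝ) ≤ ((t:ℝ)-(s:ℝ))-k := by linarith
        have h3 : (0:ℝ) ≤ -(ERdelta s t + 2*(ERalpha s t - 1)) := by linarith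
        have h4 : (0:ℝ) ≤ ((t:ℝ)-(s:ℝ)-1) := by linarith
        have b1 : 0 ≤ (k-1)*(((ERdelta s t + 2*(ERalpha s t - 1))*((t:ℝ)-(s:ℝ))*(((t:ℝ)-(s:ℝ))+1)
            - 2*(ERdelta s t + (((t:ℝ)-(s:ℝ))+1)*(ERalpha s t - 1)))/2) := by
          apply mul_nonneg h1; linarith
        have b2 : 0 ≤ (-(ERdelta s t + 2*(ERalpha s t - 1))/2)*(((t:ℝ)-(s:ℝ)-1)*((k-1)*(((t:ℝ)-(s:ℝ))-k))) := by
          apply mul_nonneg (by linarith)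
          exact mul_nonneg h4 (mul_nonneg h1 h2)
        linarith
      have := aux_le h0 hM1
      linarith
    · intro x hx2 hxM
      have hM1 : (0:ℝ) < (t:ℝ) - (s:ℝ) - 2 := by linarith
      have h0 : 0 ≤ ((t:ℝ)-(s:ℝ)-2) * ((ERdelta s t + 2*(ERalpha s t - 1))/2 * (x * (x - 1))
          - (ERdelta s t + x * (ERalpha s t - 1))) := by
        have key : ((t:ℝ)-(s:ℝ)-2) * ((ERdelta s t + 2*(ERalpha s t - 1))/2 * (x * (x - 1))
            - (ERdelta s t + x * (ERalpha s t - 1))) =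
            (x-2)*(((ERdelta s t + 2*(ERalpha s t - 1))*((t:ℝ)-(s:ℝ))*(((t:ℝ)-(s:ℝ))-1)
            - 2*(ERdelta s t + ((t:ℝ)-(s:ℝ))*(ERalpha s t - 1)))/2)
            + (-(ERdelta s t + 2*(ERalpha s t - 1))/2)*(((t:ℝ)-(s:ℝ)-2)*((x-2)*(((t:ℝ)-(s:ℝ))-x))) := by
          ring
        rw [key]
        have h1 : (0:ℝ) ≤ (x-2) := by linarith
        have h2 : (0:ℝ) ≤ ((t:ℝ)-(s:ℝ))-x := by linarith
        have h3 : (0:ℝ) ≤ -(ERdelta s t + 2*(ERalpha s t - 1)) := by linarith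
        have h4 : (0:ℝ) ≤ ((t:ℝ)-(s:ℝ)-2) := by linarith
        have b1 : 0 ≤ (x-2)*(((ERdelta s t + 2*(ERalpha s t - 1))*((t:ℝ)-(s:ℝ))*(((t:ℝ)-(s:ℝ))-1)
            - 2*(ERdelta s t + ((t:ℝ)-(s:ℝ))*(ERalpha s t - 1)))/2) := by
          apply mul_nonneg h1; linarith
        have b2 : 0 ≤ (-(ERdelta s t + 2*(ERalpha s t - 1))/2)*(((t:ℝ)-(s:ℝ)-2)*((x-2)*(((t:ℝ)-(s:ℝ))-x))) := by
          apply mul_nonneg (by linarith)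
          exact mul_nonneg h4 (mul_nonneg h1 h2)
        linarith
      have := aux_le h0 hM1
      linarith
    · have e : ((t : ℝ) - 2 - ERdelta s t - 2 * (ERalpha s t - 1)
          + (ERdelta s t + (s : ℝ) * (ERalpha s t - 1))
          + (ERdelta s t + 2*(ERalpha s t - 1)) * ((s : ℝ) * ((t : ℝ) - (s : ℝ)))
          + (ERdelta s t + 2*(ERalpha s t - 1))/2 * (((t : ℝ) - (s : ℝ)) * ((t : ℝ) - (s : ℝ) - 1))) *
          ((2 * (s : ℝ) - 3) * ((t : ℝ) - (s : ℝ)) * ((t : ℝ) + (s : ℝ) - 1) - 2 * (s : ℝ) + 4) = 0 := by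
        rw [ERdelta]
        linear_combination (((s:ℝ)-2) + (3-2*(s:ℝ))*((s:ℝ)*((t:ℝ)-(s:ℝ))
          + ((t:ℝ)-(s:ℝ))*(((t:ℝ)-(s:ℝ))-1)/2)) * halpha
      exact aux_nonpos e hden le_rfl
  · -- exceptional case : lam = d+2E, mu = -(d+E)/M
    have hM0 : (0:ℝ) < (t:ℝ) - (s:ℝ) := by linarith
    have hden : 0 < (2 * (s : ℝ) - 3) * ((t : ℝ) - (s : ℝ)) * ((s : ℝ) - 1) + 2 * (s : ℝ) - (t : ℝ) := by
      have hq : 0 ≤ (2 * (s : ℝ) - 3) * ((t : ℝ) - (s : ℝ)) * ((s : ℝ) - 1) :=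
        mul_nonneg (mul_nonneg (by linarith) (by linarith)) (by linarith)
      linarith
    have halpha : ((2 * (s : ℝ) - 3) * ((t : ℝ) - (s : ℝ)) * ((s : ℝ) - 1) + 2 * (s : ℝ) - (t : ℝ)) * ERalpha s t
        = ((s : ℝ) - 2) * ((t : ℝ) - (s : ℝ)) * ((s : ℝ) - 1) + (s : ℝ) - 1 := by
      rw [ERalpha, if_neg hreg]
      field_simp
    have hdE : 0 ≤ ERdelta s t + (ERalpha s t - 1) := by
      have e : (ERdelta s t + (ERalpha s t - 1)) *
          ((2 * (s : ℝ) - 3) * ((t : ℝ) - (s : ℝ)) * ((s : ℝ) - 1) + 2 * (s : ℝ) - (t : ℝ))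
          = (((t:ℝ)-(s:ℝ))-1)*((s:ℝ)-1)*((s:ℝ)-2) := by
        rw [ERdelta]
        linear_combination (2 - 2*(s:ℝ)) * halpha
      have hq : 0 ≤ (((t:ℝ)-(s:ℝ))-1)*((s:ℝ)-1)*((s:ℝ)-2) := by
        have h1 : (0:ℝ) ≤ ((t:ℝ)-(s:ℝ))-1 := by linarith
        have h2 : (0:ℝ) ≤ (s:ℝ)-1 := by linarith
        have h3 : (0:ℝ) ≤ (s:ℝ)-2 := by linarith
        positivity
      exact aux_nonneg e hden hq
    have hE1 : (((t:ℝ)-(s:ℝ))+2)*ERdelta s t + (2*((t:ℝ)-(s:ℝ))+2)*(ERalpha s t - 1) ≤ 0 := by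
      have e : ((((t:ℝ)-(s:ℝ))+2)*ERdelta s t + (2*((t:ℝ)-(s:ℝ))+2)*(ERalpha s t - 1)) *
          ((2 * (s : ℝ) - 3) * ((t : ℝ) - (s : ℝ)) * ((s : ℝ) - 1) + 2 * (s : ℝ) - (t : ℝ))
          = (s:ℝ)^2*((t:ℝ)-(s:ℝ)) - 2*(s:ℝ)^2 - (s:ℝ)*((t:ℝ)-(s:ℝ))^2 - 3*(s:ℝ)*((t:ℝ)-(s:ℝ))
          + 6*(s:ℝ) + 2*((t:ℝ)-(s:ℝ))^2 + ((t:ℝ)-(s:ℝ)) - 4 := by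
        rw [ERdelta]
        linear_combination ((((t:ℝ)-(s:ℝ))+2)*(1-2*(s:ℝ)) + 2*((t:ℝ)-(s:ℝ))+2) * halpha
      exact aux_nonpos e hden (e1_exc s t hs ht1 ht2 hreg)
    have hE2 : ((t:ℝ)-(s:ℝ))*ERdelta s t + (2*((t:ℝ)-(s:ℝ))-1)*(ERalpha s t - 1) ≤ 0 := by
      have e : (((t:ℝ)-(s:ℝ))*ERdelta s t + (2*((t:ℝ)-(s:ℝ))-1)*(ERalpha s t - 1)) *
          ((2 * (s : ℝ) - 3) * ((t : ℝ) - (s : ℝ)) * ((s : ℝ) - 1) + 2 * (s : ℝ) - (t : ℝ))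
          = -((((t:ℝ)-(s:ℝ))-1)*((s:ℝ)*((t:ℝ)-(s:ℝ)) - 2*((t:ℝ)-(s:ℝ)) + 1)) := by
        rw [ERdelta]
        linear_combination (((t:ℝ)-(s:ℝ))*(1-2*(s:ℝ)) + 2*((t:ℝ)-(s:ℝ))-1) * halpha
      have hq : -((((t:ℝ)-(s:ℝ))-1)*((s:ℝ)*((t:ℝ)-(s:ℝ)) - 2*((t:ℝ)-(s:ℝ)) + 1)) ≤ 0 := by
        have h1 : (0:ℝ) ≤ ((t:ℝ)-(s:ℝ))-1 := by linarith
        nlinarith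
      exact aux_nonpos e hden hq
    refine ⟨ERdelta s t + 2*(ERalpha s t - 1),
      -(ERdelta s t + (ERalpha s t - 1))/((t:ℝ)-(s:ℝ)), ?_, ?_, ?_⟩
    · intro k hk1 hkM
      have key : (ERdelta s t + 2*(ERalpha s t - 1)) * k
          + (-(ERdelta s t + (ERalpha s t - 1))/((t:ℝ)-(s:ℝ))) * (k * (k - 1))
          - (ERdelta s t + (k + 1) * (ERalpha s t - 1)) =
          (ERdelta s t + (ERalpha s t - 1)) * ((k-1)*(((t:ℝ)-(s:ℝ))-k)) / ((t:ℝ)-(s:ℝ)) := by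
        field_simp
        ring
      have h1 : (0:ℝ) ≤ (k-1) := by linarith
      have h2 : (0:ℝ) ≤ ((t:ℝ)-(s:ℝ))-k := by linarith
      have h0 : 0 ≤ (ERdelta s t + (ERalpha s t - 1)) * ((k-1)*(((t:ℝ)-(s:ℝ))-k)) / ((t:ℝ)-(s:ℝ)) := by
        apply div_nonneg _ hM0.le
        exact mul_nonneg hdE (mul_nonneg h1 h2)
      linarith [key ▸ h0]
    · intro x hx2 hxM
      have key : ((t:ℝ)-(s:ℝ)) * ((-(ERdelta s t + (ERalpha s t - 1))/((t:ℝ)-(s:ℝ))) * (x * (x - 1))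
          - (ERdelta s t + x * (ERalpha s t - 1))) =
          -(((t:ℝ)-(s:ℝ))*ERdelta s t + ((t:ℝ)-(s:ℝ))*x*(ERalpha s t - 1)
            + (ERdelta s t + (ERalpha s t - 1))*(x*(x-1))) := by
        field_simp
        ring
      have hfx : ((t:ℝ)-(s:ℝ))*ERdelta s t + ((t:ℝ)-(s:ℝ))*x*(ERalpha s t - 1)
          + (ERdelta s t + (ERalpha s t - 1))*(x*(x-1)) ≤ 0 := by
        rcases eq_or_lt_of_le (show (2:ℝ) ≤ (t:ℝ)-(s:ℝ) by linarith) with hM2 | hM2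
        · have hx : x = 2 := le_antisymm (by linarith [hxM, hM2]) hx2
          subst hx
          nlinarith [hE1, hM2]
        · have key2 : (((t:ℝ)-(s:ℝ))-2) * (((t:ℝ)-(s:ℝ))*ERdelta s t + ((t:ℝ)-(s:ℝ))*x*(ERalpha s t - 1)
              + (ERdelta s t + (ERalpha s t - 1))*(x*(x-1))) =
              (((t:ℝ)-(s:ℝ))-x) * ((((t:ℝ)-(s:ℝ))+2)*ERdelta s t + (2*((t:ℝ)-(s:ℝ))+2)*(ERalpha s t - 1))
              + (x-2) * (((t:ℝ)-(s:ℝ)) * (((t:ℝ)-(s:ℝ))*ERdelta s t + (2*((t:ℝ)-(s:ℝ))-1)*(ERalpha s t - 1)))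
              - (ERdelta s t + (ERalpha s t - 1))*((((t:ℝ)-(s:ℝ))-2)*((x-2)*(((t:ℝ)-(s:ℝ))-x))) := by
            ring
          have h1 : (0:ℝ) ≤ (x-2) := by linarith
          have h2 : (0:ℝ) ≤ ((t:ℝ)-(s:ℝ))-x := by linarith
          have h3 : (0:ℝ) < ((t:ℝ)-(s:ℝ))-2 := by linarith
          have b1 : (((t:ℝ)-(s:ℝ))-x) * ((((t:ℝ)-(s:ℝ))+2)*ERdelta s t + (2*((t:ℝ)-(s:ℝ))+2)*(ERalpha s t - 1)) ≤ 0 :=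
            mul_nonpos_of_nonneg_of_nonpos h2 hE1
          have b2 : (x-2) * (((t:ℝ)-(s:ℝ)) * (((t:ℝ)-(s:ℝ))*ERdelta s t + (2*((t:ℝ)-(s:ℝ))-1)*(ERalpha s t - 1))) ≤ 0 :=
            mul_nonpos_of_nonneg_of_nonpos h1 (mul_nonpos_of_nonneg_of_nonpos hM0.le hE2)
          have b3 : 0 ≤ (ERdelta s t + (ERalpha s t - 1))*((((t:ℝ)-(s:ℝ))-2)*((x-2)*(((t:ℝ)-(s:ℝ))-x))) :=
            mul_nonneg hdE (mul_nonneg h3.le (mul_nonneg h1 h2))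
          nlinarith [key2, b1, b2, b3, h3]
      nlinarith [key, hfx, hM0]
    · have hmu : (-(ERdelta s t + (ERalpha s t - 1))/((t:ℝ)-(s:ℝ))) * (((t : ℝ) - (s : ℝ)) * ((t : ℝ) - (s : ℝ) - 1))
          = -((ERdelta s t + (ERalpha s t - 1)) * ((t:ℝ)-(s:ℝ)-1)) := by
        field_simp
      rw [hmu]
      have e : ((t : ℝ) - 2 - ERdelta s t - 2 * (ERalpha s t - 1)
          + (ERdelta s t + (s : ℝ) * (ERalpha s t - 1))
          + (ERdelta s t + 2*(ERalpha s t - 1)) * ((s : ℝ) * ((t : ℝ) - (s : ℝ)))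
          + -((ERdelta s t + (ERalpha s t - 1)) * ((t:ℝ)-(s:ℝ)-1))) *
          ((2 * (s : ℝ) - 3) * ((t : ℝ) - (s : ℝ)) * ((s : ℝ) - 1) + 2 * (s : ℝ) - (t : ℝ)) = 0 := by
        rw [ERdelta]
        linear_combination (((s:ℝ)-2) + (3-2*(s:ℝ))*((s:ℝ)*((t:ℝ)-(s:ℝ)))
          - (2-2*(s:ℝ))*((t:ℝ)-(s:ℝ)-1)) * halpha
      exact aux_nonpos e hden le_rfl

open Finset

lemma inter_card_le_one {s t : ℕ} (Q : ColourScheme s t) {B D : Finset (Fin t)}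
    (hB : B ∈ Q.blocks) (hD : D ∈ Q.blocks) (hne : B ≠ D) : (B ∩ D).card ≤ 1 := by
  by_contra h
  push_neg at h
  obtain ⟨x, hx, y, hy, hxy⟩ := Finset.one_lt_card.mp h
  rw [Finset.mem_inter] at hx hy
  exact hne ((Q.existsUnique_block x y hxy).unique ⟨hB, hx.1, hy.1⟩ ⟨hD, hx.2, hy.2⟩)

noncomputable def theBlock {s t : ℕ} (Q : ColourScheme s t) (p : Fin t × Fin t) :
    Finset (Fin t) :=
  if h : p.1 ≠ p.2 then (Q.existsUnique_block p.1 p.2 h).choose else ∅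

lemma theBlock_spec {s t : ℕ} (Q : ColourScheme s t) {x y : Fin t} (h : x ≠ y) :
    theBlock Q (x, y) ∈ Q.blocks ∧ x ∈ theBlock Q (x, y) ∧ y ∈ theBlock Q (x, y) := by
  rw [theBlock, dif_pos h]
  exact (Q.existsUnique_block x y h).choose_spec.1

lemma theBlock_eq {s t : ℕ} (Q : ColourScheme s t) {x y : Fin t} (h : x ≠ y)
    {B : Finset (Fin t)} (hB : B ∈ Q.blocks) (hx : x ∈ B) (hy : y ∈ B) :
    theBlock Q (x, y) = B := by
  rw [theBlock, dif_pos h]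
  exact ((Q.existsUnique_block x y h).choose_spec.2 B ⟨hB, hx, hy⟩).symm ▸ rfl

lemma block_count {s t : ℕ} (Q : ColourScheme s t) (A C : Finset (Fin t))
    (hAC : Disjoint A C) :
    ∑ B ∈ Q.blocks, (B ∩ A).card * (B ∩ C).card = A.card * C.card := by
  classical
  have hmap : ∀ p ∈ A ×ˢ C, theBlock Q p ∈ Q.blocks := by
    rintro ⟨x, y⟩ hp
    rw [Finset.mem_product] at hp
    have hne : x ≠ y := fun h => (Finset.disjoint_left.mp hAC hp.1 (h ▸ hp.2))
    exact (theBlock_spec Q hne).1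
  have hfib := Finset.card_eq_sum_card_fiberwise hmap
  rw [Finset.card_product] at hfib
  rw [hfib]
  refine Finset.sum_congr rfl fun B hB => ?_
  have : (A ×ˢ C).filter (fun p => theBlock Q p = B) = (B ∩ A) ×ˢ (B ∩ C) := by
    ext ⟨x, y⟩
    simp only [Finset.mem_filter, Finset.mem_product, Finset.mem_inter]
    constructor
    · rintro ⟨⟨hxA, hyC⟩, hf⟩
      have hne : x ≠ y := fun h => (Finset.disjoint_left.mp hAC hxA (h ▸ hyC))
      obtain ⟨-, hx, hy⟩ := theBlock_spec Q hne
      rw [hf] at hx hy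
      exact ⟨⟨hx, hxA⟩, hy, hyC⟩
    · rintro ⟨⟨hxB, hxA⟩, hyB, hyC⟩
      have hne : x ≠ y := fun h => (Finset.disjoint_left.mp hAC hxA (h ▸ hyC))
      exact ⟨⟨hxA, hyC⟩, theBlock_eq Q hne hB hxB hyB⟩
  rw [this, Finset.card_product]

lemma block_count_offDiag {s t : ℕ} (Q : ColourScheme s t) (C : Finset (Fin t)) :
    ∑ B ∈ Q.blocks, ((B ∩ C).offDiag).card = C.offDiag.card := by
  classical
  have hmap : ∀ p ∈ C.offDiag, theBlock Q p ∈ Q.blocks := by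
    rintro ⟨x, y⟩ hp
    rw [Finset.mem_offDiag] at hp
    exact (theBlock_spec Q hp.2.2).1
  have hfib := Finset.card_eq_sum_card_fiberwise hmap
  rw [hfib]
  refine (Finset.sum_congr rfl fun B hB => ?_).symm
  have : C.offDiag.filter (fun p => theBlock Q p = B) = (B ∩ C).offDiag := by
    ext ⟨x, y⟩
    simp only [Finset.mem_filter, Finset.mem_offDiag, Finset.mem_inter]
    constructor
    · rintro ⟨⟨hxC, hyC, hne⟩, hf⟩
      obtain ⟨-, hx, hy⟩ := theBlock_spec Q hne
      rw [hf] at hx hy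
      exact ⟨⟨hx, hxC⟩, ⟨hy, hyC⟩, hne⟩
    · rintro ⟨⟨hxB, hxC⟩, ⟨hyB, hyC⟩, hne⟩
      exact ⟨⟨hxC, hyC, hne⟩, theBlock_eq Q hne hB hxB hyB⟩
  rw [this]


/-- **Lemma (copycase).** If a colour scheme `Q` for `K_t` with parameter `s` has a
block of size exactly `s`, then `v(Q) ≤ 0`. -/
theorem schemeValue_nonpos_of_sBlock (s t : ℕ) (hs : 3 ≤ s) (ht1 : s + 2 ≤ t)
    (ht2 : t ≤ 2 * s - 1) (Q : ColourScheme s t) (hblock : ∃ D ∈ Q.blocks, D.card = s) :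
    schemeValue Q ≤ 0 := by
  classical
  obtain ⟨D0, hD0, hD0s⟩ := hblock
  obtain ⟨lam, mu, Hcross, Hout, Hfinal⟩ := exists_dual s t hs ht1 ht2
  have hst : s ≤ t := by omega
  have hts1 : 2 ≤ t - s := by omega
  have hMeq : ((t - s : ℕ) : ℝ) = (t : ℝ) - (s : ℝ) := by
    push_cast [Nat.cast_sub hst]; ring
  have hcompl : (D0ᶜ : Finset (Fin t)).card = t - s := by
    rw [Finset.card_compl, hD0s, Fintype.card_fin]
  -- counting identities
  have count1 : ∑ B ∈ Q.blocks, (B ∩ D0).card * (B ∩ D0ᶜ).card = s * (t - s) := by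
    rw [block_count Q D0 D0ᶜ disjoint_compl_right, hD0s, hcompl]
  have count2 : ∑ B ∈ Q.blocks, ((B ∩ D0ᶜ).offDiag).card = (t-s)*(t-s) - (t-s) := by
    rw [block_count_offDiag Q D0ᶜ, Finset.offDiag_card, hcompl]
  -- real versions
  have castOff : ∀ c : ℕ, ((c * c - c : ℕ) : ℝ) = (c : ℝ) * ((c : ℝ) - 1) := by
    intro c
    have hcc : c ≤ c * c := by
      rcases Nat.eq_zero_or_pos c with rfl | hc
      · simp
      · exact Nat.le_mul_of_pos_left c hc
    push_cast [Nat.cast_sub hcc]; ring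
  have rcount1 : ∑ B ∈ Q.blocks, (((B ∩ D0).card : ℝ) * ((B ∩ D0ᶜ).card : ℝ))
      = (s : ℝ) * ((t : ℝ) - (s : ℝ)) := by
    have h := congrArg (Nat.cast : ℕ → ℝ) count1
    push_cast [Nat.cast_sub hst] at h
    exact h
  have rcount2 : ∑ B ∈ Q.blocks, (((B ∩ D0ᶜ).card : ℝ) * (((B ∩ D0ᶜ).card : ℝ) - 1))
      = ((t : ℝ) - (s : ℝ)) * ((t : ℝ) - (s : ℝ) - 1) := by
    have h := congrArg (Nat.cast : ℕ → ℝ) count2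
    rw [Nat.cast_sum] at h
    calc ∑ B ∈ Q.blocks, (((B ∩ D0ᶜ).card : ℝ) * (((B ∩ D0ᶜ).card : ℝ) - 1))
        = ∑ B ∈ Q.blocks, (((B ∩ D0ᶜ).offDiag.card : ℕ) : ℝ) := by
          refine Finset.sum_congr rfl fun B _ => ?_
          rw [Finset.offDiag_card, castOff]
      _ = (((t-s)*(t-s) - (t-s) : ℕ) : ℝ) := h
      _ = ((t-s : ℕ) : ℝ) * (((t-s : ℕ) : ℝ) - 1) := castOff (t-s)
      _ = ((t : ℝ) - (s : ℝ)) * ((t : ℝ) - (s : ℝ) - 1) := by rw [hMeq]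
  -- per-block inequality
  have keyB : ∀ B ∈ Q.blocks, B ≠ D0 →
      ERdelta s t + (B.card : ℝ) * (ERalpha s t - 1) ≤
        lam * (((B ∩ D0).card : ℝ) * ((B ∩ D0ᶜ).card : ℝ))
        + mu * (((B ∩ D0ᶜ).card : ℝ) * (((B ∩ D0ᶜ).card : ℝ) - 1)) := by
    intro B hB hBne
    have hc1le : (B ∩ D0).card ≤ 1 := inter_card_le_one Q hB hD0 hBne
    have hsd : B \ D0 = B ∩ D0ᶜ := by
      ext x; simp [Finset.mem_sdiff, Finset.mem_inter, Finset.mem_compl]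
    have hsplit : (B ∩ D0).card + (B ∩ D0ᶜ).card = B.card := by
      rw [← hsd]; exact Finset.card_inter_add_card_sdiff B D0
    have hc2le : (B ∩ D0ᶜ).card ≤ t - s := by
      rw [← hcompl]; exact Finset.card_le_card Finset.inter_subset_right
    have hc2M : ((B ∩ D0ᶜ).card : ℝ) ≤ (t : ℝ) - (s : ℝ) := by
      rw [← hMeq]; exact_mod_cast hc2le
    have hB2 : 2 ≤ B.card := Q.two_le_card B hB
    rcases Nat.le_one_iff_eq_zero_or_eq_one.mp hc1le with h0 | h1
    · have hc2 : (B ∩ D0ᶜ).card = B.card := by omega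
      have h2c : (2 : ℝ) ≤ ((B ∩ D0ᶜ).card : ℝ) := by exact_mod_cast hc2 ▸ hB2
      have := Hout ((B ∩ D0ᶜ).card : ℝ) h2c hc2M
      rw [h0, ← hc2]
      push_cast
      linarith
    · have hc2 : B.card = (B ∩ D0ᶜ).card + 1 := by omega
      have h1c : (1 : ℝ) ≤ ((B ∩ D0ᶜ).card : ℝ) := by
        have : 1 ≤ (B ∩ D0ᶜ).card := by omega
        exact_mod_cast this
      have := Hcross ((B ∩ D0ᶜ).card : ℝ) h1c hc2M
      rw [h1, hc2]
      push_cast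
      linarith
  -- assemble
  set g : Finset (Fin t) → ℝ := fun B =>
    lam * (((B ∩ D0).card : ℝ) * ((B ∩ D0ᶜ).card : ℝ))
    + mu * (((B ∩ D0ᶜ).card : ℝ) * (((B ∩ D0ᶜ).card : ℝ) - 1)) with hg
  have hgD0 : g D0 = 0 := by
    have : D0 ∩ D0ᶜ = (∅ : Finset (Fin t)) := by
      ext x; simp
    simp [hg, this]
  have hsumg : ∑ B ∈ Q.blocks, g B
      = lam * ((s : ℝ) * ((t : ℝ) - (s : ℝ))) + mu * (((t : ℝ) - (s : ℝ)) * ((t : ℝ) - (s : ℝ) - 1)) := by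
    rw [hg, Finset.sum_add_distrib, ← Finset.mul_sum, ← Finset.mul_sum, rcount1, rcount2]
  have hse : ∑ B ∈ Q.blocks.erase D0, g B = ∑ B ∈ Q.blocks, g B := by
    rw [← Finset.sum_erase_add _ _ hD0, hgD0, add_zero]
  have hf : ∑ B ∈ Q.blocks, (ERdelta s t + (B.card : ℝ) * (ERalpha s t - 1))
      = ∑ B ∈ Q.blocks.erase D0, (ERdelta s t + (B.card : ℝ) * (ERalpha s t - 1))
        + (ERdelta s t + (s : ℝ) * (ERalpha s t - 1)) := by
    rw [← Finset.sum_erase_add _ _ hD0, hD0s]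
  have hbound : ∑ B ∈ Q.blocks.erase D0, (ERdelta s t + (B.card : ℝ) * (ERalpha s t - 1))
      ≤ ∑ B ∈ Q.blocks.erase D0, g B :=
    Finset.sum_le_sum fun B hB =>
      keyB B (Finset.mem_of_mem_erase hB) (Finset.ne_of_mem_erase hB)
  have hv : schemeValue Q = ((t : ℝ) - 2 - ERdelta s t - 2 * (ERalpha s t - 1))
      + ∑ B ∈ Q.blocks, (ERdelta s t + (B.card : ℝ) * (ERalpha s t - 1)) := by
    have hsum : ∑ B ∈ Q.blocks, (ERdelta s t + (B.card : ℝ) * (ERalpha s t - 1))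
        = (Q.blocks.card : ℝ) * ERdelta s t
          + (∑ B ∈ Q.blocks, (B.card : ℝ)) * (ERalpha s t - 1) := by
      rw [Finset.sum_add_distrib, Finset.sum_const, nsmul_eq_mul, ← Finset.sum_mul]
    rw [schemeValue, hsum]
    ring
  rw [hv, hf]
  have := hse ▸ hbound
  rw [hsumg] at this
  linarith [Hfinal, this]
end

section
/- Let s ≥ 3 and s+2 ≤ t ≤ 2s-1 be integers. Suppose Q is a colour scheme for K_t with parameter s such that v(Q') ≤ v(Q) for every colour scheme Q' for K_t with parameter s. Let P be a node of Q such that every block containing P has size strictly less than t/2. Then the local value satisfies v(P) < 2δ/t. -/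
/-- The local value `v(P) = 1 + Σ_{D : P ∈ D} (δ/|D| + (α-1))` at a node `P` of a
scheme, where the sum is over all blocks containing `P`. -/
noncomputable def localValue {s t : ℕ} (Q : ColourScheme s t) (P : Fin t) : ℝ :=
  1 + ∑ D ∈ Q.blocks.filter (fun D => P ∈ D), (ERdelta s t / (D.card : ℝ) + (ERalpha s t - 1))

/-! The blocks through `P` partition the other `t - 1` nodes, so `∑_{D ∋ P} (|D| - 1) = t - 1`
and it suffices that each block of size `d` through `P` contributes
`δ/d + α - 1 < (d - 1)/(t - 1) · (2δ/t - 1)`. Multiplied by `d t (t - 1)` this says `F(d) > 0`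
for the quadratic `F = blockGap t α δ`, which is concave as soon as `2δ < t`; since
`2 ≤ d ≤ (t - 1)/2`, it is enough to check `F(2) > 0` and `F((t - 1)/2) > 0`.
These three inequalities become polynomial in `s, t` once the denominator of `α` is cleared,
and in the coordinates `u, v ≥ 0` measuring the distance of `t` to the two ends of its range
all their coefficients are nonnegative. -/

open Finset

namespace ColourScheme

variable {s t : ℕ} (Q : ColourScheme s t) (P : Fin t)

lemma pairwiseDisjoint_erase :
    (Q.blocks.filter (P ∈ ·) : Set (Finset (Fin t))).PairwiseDisjoint (·.erase P) := by
  intro D₁ hD₁ D₂ hD₂ hne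
  simp only [coe_filter, Set.mem_ofPred_eq] at hD₁ hD₂
  refine disjoint_left.2 fun y hy₁ hy₂ => hne ?_
  obtain ⟨D, -, huniq⟩ := Q.existsUnique_block P y (ne_of_mem_erase hy₁).symm
  exact (huniq D₁ ⟨hD₁.1, hD₁.2, mem_of_mem_erase hy₁⟩).trans
    (huniq D₂ ⟨hD₂.1, hD₂.2, mem_of_mem_erase hy₂⟩).symm

lemma biUnion_erase_eq_erase_univ :
    (Q.blocks.filter (P ∈ ·)).biUnion (·.erase P) = univ.erase P := by
  ext y
  simp only [mem_biUnion, mem_filter, mem_erase, mem_univ, and_true]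
  constructor
  · rintro ⟨D, -, hyP, -⟩
    exact hyP
  · intro hyP
    obtain ⟨D, ⟨hD, hPD, hyD⟩, -⟩ := Q.existsUnique_block P y (Ne.symm hyP)
    exact ⟨D, ⟨hD, hPD⟩, hyP, hyD⟩

theorem sum_card_sub_one_filter_mem :
    ∑ D ∈ Q.blocks.filter (P ∈ ·), ((D.card : ℝ) - 1) = t - 1 :=
  calc ∑ D ∈ Q.blocks.filter (P ∈ ·), ((D.card : ℝ) - 1)
      = ∑ D ∈ Q.blocks.filter (P ∈ ·), ((D.erase P).card : ℝ) := by
        refine sum_congr rfl fun D hD => ?_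
        obtain ⟨hDQ, hPD⟩ := mem_filter.1 hD
        rw [card_erase_of_mem hPD, Nat.cast_pred (by linarith [Q.two_le_card D hDQ])]
    _ = ((univ.erase P).card : ℝ) := by
        rw [← Q.biUnion_erase_eq_erase_univ P, card_biUnion (Q.pairwiseDisjoint_erase P),
          Nat.cast_sum]
    _ = t - 1 := by
        rw [card_erase_of_mem (mem_univ P), card_univ, Fintype.card_fin, Nat.cast_pred (Fin.pos P)]

end ColourScheme

lemma le_sub_one_div_two_of_lt_div_two {m n : ℕ} (h : (m : ℝ) < n / 2) :
    (m : ℝ) ≤ (n - 1) / 2 := by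
  have hlt : 2 * m < n := by exact_mod_cast (by linarith : (2 * m : ℝ) < n)
  have : ((2 * m + 1 : ℕ) : ℝ) ≤ n := by exact_mod_cast hlt
  push_cast at this
  linarith

def blockGap (t α δ d : ℝ) : ℝ :=
  d * (d - 1) * (2 * δ - t) + d * t * (t - 1) * (1 - α) - δ * t * (t - 1)

lemma blockGap_pos_of_mem_Icc {t α δ x y d : ℝ} (hδ : 2 * δ < t) (hx : 0 < blockGap t α δ x)
    (hy : 0 < blockGap t α δ y) (hd : d ∈ Set.Icc x y) : 0 < blockGap t α δ d := by
  obtain ⟨hxd, hdy⟩ := hd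
  rcases hxd.eq_or_lt with rfl | hxd
  · exact hx
  have hinterp : (y - x) * blockGap t α δ d = (d - x) * blockGap t α δ y +
      (y - d) * blockGap t α δ x + (t - 2 * δ) * ((d - x) * (y - d) * (y - x)) := by
    simp only [blockGap]
    ring
  refine pos_of_mul_pos_right ?_ (by linarith : 0 ≤ y - x)
  rw [hinterp]
  have h₁ : 0 < (d - x) * blockGap t α δ y := mul_pos (by linarith) hy
  have h₂ : 0 ≤ (y - d) * blockGap t α δ x := mul_nonneg (by linarith) hx.le
  have h₃ : 0 ≤ (t - 2 * δ) * ((d - x) * (y - d) * (y - x)) :=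
    mul_nonneg (by linarith) (mul_nonneg (mul_nonneg (by linarith) (by linarith)) (by linarith))
  linarith

lemma div_add_sub_one_lt_of_blockGap_pos {t α δ d : ℝ} (ht : 1 < t) (hd : 0 < d)
    (h : 0 < blockGap t α δ d) : δ / d + (α - 1) < (d - 1) * ((2 * δ / t - 1) / (t - 1)) := by
  have ht₀ : t - 1 ≠ 0 := by linarith
  have hmargin : (d - 1) * ((2 * δ / t - 1) / (t - 1)) - (δ / d + (α - 1)) =
      blockGap t α δ d / (d * t * (t - 1)) := by
    simp only [blockGap]
    field_simp
    ring
  have : 0 < blockGap t α δ d / (d * t * (t - 1)) := div_pos h (by positivity)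
  linarith

def GapBounds (t α δ : ℝ) : Prop :=
  2 * δ < t ∧ 0 < blockGap t α δ 2 ∧ 0 < blockGap t α δ ((t - 1) / 2)

lemma gapBounds_of_isRegularPair {s t : ℕ} (h : IsRegularPair s t) :
    GapBounds t (ERalpha s t) (ERdelta s t) := by
  obtain ⟨u, v, rfl, rfl⟩ : ∃ u v : ℕ, s = u + v + 7 ∧ t = 2 * u + v + 10 :=
    ⟨t - s - 3, 2 * s - 4 - t, by rcases h with h | h | h <;> omega,
      by rcases h with h | h | h <;> omega⟩
  rw [ERdelta, ERalpha, if_pos h, GapBounds, blockGap, blockGap]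
  push_cast
  have hM : (0 : ℝ) < (2 * (u + v + 7) - 3) * (2 * u + v + 10 - (u + v + 7)) *
      (2 * u + v + 10 + (u + v + 7) - 1) - 2 * (u + v + 7) + 4 := by
    ring_nf
    positivity
  refine ⟨sub_pos.1 ?_, ?_, ?_⟩
  all_goals
    rw [← mul_pos_iff_of_pos_left hM]
    field_simp
    ring_nf
    positivity

lemma gapBounds_of_not_isRegularPair {s t : ℕ} (h : ¬IsRegularPair s t) (ht₁ : s + 2 ≤ t)
    (ht₂ : t ≤ 2 * s - 1) : GapBounds t (ERalpha s t) (ERdelta s t) := by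
  obtain ⟨u, v, rfl, rfl⟩ : ∃ u v : ℕ, s = u + v + 3 ∧ t = 2 * u + v + 5 :=
    ⟨t - s - 2, 2 * s - 1 - t, by omega, by omega⟩
  rw [ERdelta, ERalpha, if_neg h, GapBounds, blockGap, blockGap]
  push_cast
  have hM : (0 : ℝ) < (2 * (u + v + 3) - 3) * (2 * u + v + 5 - (u + v + 3)) *
      (u + v + 3 - 1) + 2 * (u + v + 3) - (2 * u + v + 5) := by
    ring_nf
    positivity
  refine ⟨sub_pos.1 ?_, ?_, ?_⟩
  all_goals
    rw [← mul_pos_iff_of_pos_left hM]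
    field_simp
    ring_nf
    positivity

lemma gapBounds_ERalpha {s t : ℕ} (ht₁ : s + 2 ≤ t) (ht₂ : t ≤ 2 * s - 1) :
    GapBounds t (ERalpha s t) (ERdelta s t) := by
  by_cases h : IsRegularPair s t
  · exact gapBounds_of_isRegularPair h
  · exact gapBounds_of_not_isRegularPair h ht₁ ht₂

theorem localValue_lt_general (s t : ℕ) (ht1 : s + 2 ≤ t) (ht2 : t ≤ 2 * s - 1)
    (Q : ColourScheme s t)
    (P : Fin t) (hP : ∀ D ∈ Q.blocks, P ∈ D → (D.card : ℝ) < (t : ℝ) / 2) :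
    localValue Q P < 2 * ERdelta s t / (t : ℝ) := by
  obtain ⟨hδ, hgap₂, hgap_half⟩ := gapBounds_ERalpha ht1 ht2
  have ht : (1 : ℝ) < t := by exact_mod_cast (by omega : 1 < t)
  have hsum := Q.sum_card_sub_one_filter_mem P
  have hblock : ∀ D ∈ Q.blocks.filter (P ∈ ·), ERdelta s t / D.card + (ERalpha s t - 1) <
      (D.card - 1) * ((2 * ERdelta s t / t - 1) / (t - 1)) := by
    intro D hD
    obtain ⟨hDQ, hPD⟩ := mem_filter.1 hD
    have hd₂ : (2 : ℝ) ≤ D.card := by exact_mod_cast Q.two_le_card D hDQ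
    exact div_add_sub_one_lt_of_blockGap_pos ht (by linarith) (blockGap_pos_of_mem_Icc hδ hgap₂
      hgap_half ⟨hd₂, le_sub_one_div_two_of_lt_div_two (hP D hDQ hPD)⟩)
  have hne : (Q.blocks.filter (P ∈ ·)).Nonempty :=
    nonempty_of_sum_ne_zero (by rw [hsum]; linarith)
  calc localValue Q P
      < 1 + ∑ D ∈ Q.blocks.filter (P ∈ ·), (D.card - 1) * ((2 * ERdelta s t / t - 1) / (t - 1)) :=
        (add_lt_add_iff_left 1).2 (sum_lt_sum_of_nonempty hne hblock)
    _ = 2 * ERdelta s t / t := by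
        rw [← sum_mul, hsum, mul_div_cancel₀ _ (by linarith : (t : ℝ) - 1 ≠ 0)]
        ring

/-- **Lemma (localneg).** Let `Q` be a colour scheme for `K_t` with parameter `s` of
maximal value, and let `P` be a node all of whose blocks have size less than `t/2`.
Then the local value satisfies `v(P) < 2δ/t`. -/
theorem localValue_lt (s t : ℕ) (hs : 3 ≤ s) (ht1 : s + 2 ≤ t) (ht2 : t ≤ 2 * s - 1)
    (Q : ColourScheme s t)
    (hmax : ∀ Q' : ColourScheme s t, schemeValue Q' ≤ schemeValue Q)
    (P : Fin t) (hP : ∀ D ∈ Q.blocks, P ∈ D → (D.card : ℝ) < (t : ℝ) / 2) :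
    localValue Q P < 2 * ERdelta s t / (t : ℝ) :=
  localValue_lt_general s t ht1 ht2 Q P hP
end

section
/- Let s ≥ 3 and s+2 ≤ t ≤ 2s-1 be integers. Suppose Q is a colour scheme for K_t with parameter s such that v(Q') ≤ v(Q) for every colour scheme Q' for K_t with parameter s, and suppose that the largest block D of Q has size at least t/2. Then D has size exactly s. -/
/-!
Suppose the largest block `D` had fewer than `s` nodes, and absorb a node `x ∉ D` into it: `D`
becomes `D ∪ {x}`, and every other block `C` through `x` meets `D` in a single node `y`; if
`|C| = 2` it disappears, otherwise it loses `x` and the pairs `{x, w}`, `w ∈ C \ {x, y}`, become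
blocks of their own. The value of a scheme is affine in the block sizes, and with `m` blocks `C`
of size at least `3` (the `thickPencil`), `k` of size `2` (the `thinPencil`) and `e` new pairs
(one per node of `outerPoints`), the value grows by
`(1 - α)(m - 1) - η(e - k)`, where `η = 2(1 - α) - δ`. Since `D` is largest and `|D| ≥ t/2`,
`e ≤ min(m(|D| - 2), t - |D| - 1)`, and together with `0 < η < 1 - α` and `2(1 - α) < tη`
this growth is positive, contradicting maximality.
-/

open Finset

variable {α : Type*}

def CoversPair (F : Finset (Finset α)) (a b : α) : Prop := ∃ C ∈ F, a ∈ C ∧ b ∈ C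

def IsLinearFamily (F : Finset (Finset α)) : Prop :=
  ∀ a b : α, a ≠ b → ∃! C, C ∈ F ∧ a ∈ C ∧ b ∈ C

namespace IsLinearFamily

variable {F S R : Finset (Finset α)} {C C' : Finset α} {a b : α}

theorem eq_of_mem (hF : IsLinearFamily F) (hC : C ∈ F) (hC' : C' ∈ F) (hab : a ≠ b)
    (ha : a ∈ C) (hb : b ∈ C) (ha' : a ∈ C') (hb' : b ∈ C') : C = C' :=
  (hF a b hab).unique ⟨hC, ha, hb⟩ ⟨hC', ha', hb'⟩

variable [DecidableEq α]

theorem card_inter_le_one (hF : IsLinearFamily F) (hC : C ∈ F) (hC' : C' ∈ F) (hne : C ≠ C') :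
    #(C ∩ C') ≤ 1 :=
  card_le_one.2 fun a ha b hb ↦ by
    rw [mem_inter] at ha hb
    by_contra hab
    exact hne (hF.eq_of_mem hC hC' hab ha.1 hb.1 ha.2 hb.2)

theorem disjoint_sdiff (hF : IsLinearFamily F) (hS : S ⊆ F)
    (hcov : ∀ a b, a ≠ b → CoversPair R a b → CoversPair S a b) (hR : ∀ C ∈ R, 2 ≤ #C) :
    Disjoint (F \ S) R := by
  refine disjoint_left.2 fun C hC hCR ↦ ?_
  obtain ⟨a, ha, b, hb, hab⟩ := one_lt_card.1 (hR C hCR)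
  obtain ⟨C', hC'S, ha', hb'⟩ := hcov a b hab ⟨C, hCR, ha, hb⟩
  rw [mem_sdiff] at hC
  exact hC.2 (hF.eq_of_mem hC.1 (hS hC'S) hab ha hb ha' hb' ▸ hC'S)

theorem sdiff_union (hF : IsLinearFamily F) (hS : S ⊆ F)
    (hcov : ∀ a b, a ≠ b → (CoversPair S a b ↔ CoversPair R a b))
    (hR : (R : Set (Finset α)).Pairwise fun C C' ↦ #(C ∩ C') ≤ 1) :
    IsLinearFamily (F \ S ∪ R) := by
  intro a b hab
  obtain ⟨C, ⟨hC, ha, hb⟩, -⟩ := hF a b hab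
  refine existsUnique_of_exists_of_unique ?_ ?_
  · by_cases hCS : C ∈ S
    · obtain ⟨C', hC', ha', hb'⟩ := (hcov a b hab).1 ⟨C, hCS, ha, hb⟩
      exact ⟨C', mem_union_right _ hC', ha', hb'⟩
    · exact ⟨C, mem_union_left _ (mem_sdiff.2 ⟨hC, hCS⟩), ha, hb⟩
  have kept_ne_added : ∀ C₁ ∈ F \ S, ∀ C₂ ∈ R, a ∈ C₁ → b ∈ C₁ → a ∈ C₂ → b ∈ C₂ → False := by
    intro C₁ hC₁ C₂ hC₂ ha₁ hb₁ ha₂ hb₂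
    obtain ⟨C₃, hC₃, ha₃, hb₃⟩ := (hcov a b hab).2 ⟨C₂, hC₂, ha₂, hb₂⟩
    rw [mem_sdiff] at hC₁
    exact hC₁.2 (hF.eq_of_mem hC₁.1 (hS hC₃) hab ha₁ hb₁ ha₃ hb₃ ▸ hC₃)
  rintro C₁ C₂ ⟨hC₁, ha₁, hb₁⟩ ⟨hC₂, ha₂, hb₂⟩
  rcases mem_union.1 hC₁ with hC₁ | hC₁ <;> rcases mem_union.1 hC₂ with hC₂ | hC₂
  · exact hF.eq_of_mem (mem_sdiff.1 hC₁).1 (mem_sdiff.1 hC₂).1 hab ha₁ hb₁ ha₂ hb₂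
  · exact (kept_ne_added C₁ hC₁ C₂ hC₂ ha₁ hb₁ ha₂ hb₂).elim
  · exact (kept_ne_added C₂ hC₂ C₁ hC₁ ha₂ hb₂ ha₁ hb₁).elim
  · by_contra hne
    exact hab (card_le_one.1 (hR hC₁ hC₂ hne) a (mem_inter.2 ⟨ha₁, ha₂⟩) b
      (mem_inter.2 ⟨hb₁, hb₂⟩))

end IsLinearFamily

section Absorb

variable [DecidableEq α] (F : Finset (Finset α)) (D : Finset α) (x : α)

def pencil : Finset (Finset α) := {C ∈ F | x ∈ C ∧ ¬Disjoint C D}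

def thickPencil : Finset (Finset α) := {C ∈ pencil F D x | 3 ≤ #C}

def thinPencil : Finset (Finset α) := {C ∈ pencil F D x | ¬3 ≤ #C}

def outerPoints : Finset α := (thickPencil F D x).biUnion (· \ insert x D)

def absorbRemoved : Finset (Finset α) := insert D (pencil F D x)

def absorbAdded : Finset (Finset α) :=
  insert (insert x D)
    ((thickPencil F D x).image (·.erase x) ∪ (outerPoints F D x).image ({x, ·}))

def absorbPoint : Finset (Finset α) := F \ absorbRemoved F D x ∪ absorbAdded F D x

variable {F D x} {C : Finset α} {a b w : α}

theorem mem_pencil : C ∈ pencil F D x ↔ C ∈ F ∧ x ∈ C ∧ ¬Disjoint C D := mem_filter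

theorem pencil_subset : pencil F D x ⊆ F := filter_subset _ _

theorem mem_of_mem_pencil (hC : C ∈ pencil F D x) : x ∈ C := (mem_pencil.1 hC).2.1

theorem mem_thickPencil : C ∈ thickPencil F D x ↔ C ∈ pencil F D x ∧ 3 ≤ #C := mem_filter

theorem thickPencil_subset : thickPencil F D x ⊆ pencil F D x := filter_subset _ _

theorem mem_outerPoints :
    w ∈ outerPoints F D x ↔ ∃ C ∈ thickPencil F D x, w ∈ C ∧ w ∉ insert x D := by
  simp only [outerPoints, mem_biUnion, mem_sdiff]

theorem notMem_of_mem_outerPoints (hw : w ∈ outerPoints F D x) : w ∉ insert x D := by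
  obtain ⟨-, -, -, h⟩ := mem_outerPoints.1 hw
  exact h

theorem mem_absorbAdded : C ∈ absorbAdded F D x ↔ C = insert x D ∨
    (∃ C₀ ∈ thickPencil F D x, C₀.erase x = C) ∨ ∃ w ∈ outerPoints F D x, {x, w} = C := by
  simp only [absorbAdded, mem_insert, mem_union, mem_image]

theorem IsLinearFamily.exists_mem_pencil (hF : IsLinearFamily F) (hx : x ∉ D) {y : α}
    (hy : y ∈ D) : ∃ C ∈ pencil F D x, y ∈ C := by
  obtain ⟨C, ⟨hC, hxC, hyC⟩, -⟩ := hF x y (hy.ne_of_notMem hx).symm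
  exact ⟨C, mem_pencil.2 ⟨hC, hxC, not_disjoint_iff.2 ⟨y, hyC, hy⟩⟩, hyC⟩

theorem IsLinearFamily.card_inter_pencil (hF : IsLinearFamily F) (hD : D ∈ F) (hx : x ∉ D)
    (hC : C ∈ pencil F D x) : #(C ∩ D) = 1 := by
  rw [mem_pencil] at hC
  refine le_antisymm (hF.card_inter_le_one hC.1 hD ?_) ?_
  · rintro rfl
    exact hx hC.2.1
  · exact card_pos.2 (not_disjoint_iff_nonempty_inter.1 hC.2.2)

theorem IsLinearFamily.card_pencil (hF : IsLinearFamily F) (hD : D ∈ F) (hx : x ∉ D) :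
    #(pencil F D x) = #D := by
  have hunique : ∀ y ∈ D, #{C ∈ pencil F D x | y ∈ C} = 1 := by
    intro y hy
    obtain ⟨C, hC, hyC⟩ := hF.exists_mem_pencil hx hy
    refine card_eq_one.2 ⟨C, eq_singleton_iff_unique_mem.2 ⟨mem_filter.2 ⟨hC, hyC⟩, ?_⟩⟩
    intro C' hC'
    rw [mem_filter] at hC'
    exact hF.eq_of_mem (pencil_subset hC'.1) (pencil_subset hC) (hy.ne_of_notMem hx).symm
      (mem_of_mem_pencil hC'.1) hC'.2 (mem_of_mem_pencil hC) hyC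
  have hsum := sum_card_inter hunique
  rw [sum_congr rfl fun C hC ↦ by rw [inter_comm, hF.card_inter_pencil hD hx hC]] at hsum
  simpa using hsum

theorem card_thickPencil_add_card_thinPencil :
    #(thickPencil F D x) + #(thinPencil F D x) = #(pencil F D x) :=
  card_filter_add_card_filter_not _

theorem exists_mem_absorbAdded_of_mem_pencil (hx : x ∉ D) (hC : C ∈ pencil F D x)
    (hbC : b ∈ C) (hbx : b ≠ x) : ∃ C' ∈ absorbAdded F D x, x ∈ C' ∧ b ∈ C' := by
  by_cases hbD : b ∈ D
  · exact ⟨insert x D, mem_absorbAdded.2 (Or.inl rfl), mem_insert_self x D,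
      mem_insert_of_mem hbD⟩
  obtain ⟨y, hyC, hyD⟩ := not_disjoint_iff.1 (mem_pencil.1 hC).2.2
  have hthick : C ∈ thickPencil F D x := mem_thickPencil.2 ⟨hC, two_lt_card.2
    ⟨x, mem_of_mem_pencil hC, b, hbC, y, hyC, hbx.symm, (hyD.ne_of_notMem hx).symm,
      (hyD.ne_of_notMem hbD).symm⟩⟩
  have hbW : b ∈ outerPoints F D x :=
    mem_outerPoints.2 ⟨C, hthick, hbC, by simp [hbx, hbD]⟩
  exact ⟨{x, b}, mem_absorbAdded.2 (Or.inr (Or.inr ⟨b, hbW, rfl⟩)), by simp, by simp⟩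

theorem coversPair_absorbAdded_of_mem_pencil (hx : x ∉ D) (hC : C ∈ pencil F D x)
    (hab : a ≠ b) (ha : a ∈ C) (hb : b ∈ C) : CoversPair (absorbAdded F D x) a b := by
  rcases eq_or_ne a x with rfl | hax
  · exact exists_mem_absorbAdded_of_mem_pencil hx hC hb hab.symm
  rcases eq_or_ne b x with rfl | hbx
  · obtain ⟨C', hC', hxC', haC'⟩ := exists_mem_absorbAdded_of_mem_pencil hx hC ha hax
    exact ⟨C', hC', haC', hxC'⟩
  have hthick : C ∈ thickPencil F D x := mem_thickPencil.2 ⟨hC, two_lt_card.2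
    ⟨x, mem_of_mem_pencil hC, a, ha, b, hb, hax.symm, hbx.symm, hab⟩⟩
  exact ⟨C.erase x, mem_absorbAdded.2 (Or.inr (Or.inl ⟨C, hthick, rfl⟩)),
    mem_erase.2 ⟨hax, ha⟩, mem_erase.2 ⟨hbx, hb⟩⟩

theorem IsLinearFamily.coversPair_absorbRemoved_of_mem_absorbAdded (hF : IsLinearFamily F)
    (hx : x ∉ D) (hC : C ∈ absorbAdded F D x) (hab : a ≠ b) (ha : a ∈ C) (hb : b ∈ C) :
    CoversPair (absorbRemoved F D x) a b := by
  have hxy : ∀ {y}, y ∈ D → ∃ C' ∈ absorbRemoved F D x, x ∈ C' ∧ y ∈ C' := fun hy ↦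
    have ⟨C', hC', hyC'⟩ := hF.exists_mem_pencil hx hy
    ⟨C', mem_insert_of_mem hC', mem_of_mem_pencil hC', hyC'⟩
  rcases mem_absorbAdded.1 hC with rfl | ⟨C₀, hC₀, rfl⟩ | ⟨w, hw, rfl⟩
  · rcases mem_insert.1 ha with rfl | haD <;> rcases mem_insert.1 hb with rfl | hbD
    · exact (hab rfl).elim
    · exact hxy hbD
    · obtain ⟨C', hC', hxC', haC'⟩ := hxy haD
      exact ⟨C', hC', haC', hxC'⟩
    · exact ⟨D, mem_insert_self D _, haD, hbD⟩
  · exact ⟨C₀, mem_insert_of_mem (thickPencil_subset hC₀), mem_of_mem_erase ha,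
      mem_of_mem_erase hb⟩
  · obtain ⟨C₀, hC₀, hwC₀, -⟩ := mem_outerPoints.1 hw
    have hpair : {x, w} ⊆ C₀ :=
      insert_subset (mem_of_mem_pencil (thickPencil_subset hC₀)) (singleton_subset_iff.2 hwC₀)
    exact ⟨C₀, mem_insert_of_mem (thickPencil_subset hC₀), hpair ha, hpair hb⟩

theorem IsLinearFamily.coversPair_absorbRemoved_iff (hF : IsLinearFamily F) (hx : x ∉ D)
    (hab : a ≠ b) :
    CoversPair (absorbRemoved F D x) a b ↔ CoversPair (absorbAdded F D x) a b := by
  refine ⟨fun ⟨C, hC, ha, hb⟩ ↦ ?_, fun ⟨C, hC, ha, hb⟩ ↦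
    hF.coversPair_absorbRemoved_of_mem_absorbAdded hx hC hab ha hb⟩
  rcases mem_insert.1 hC with rfl | hC
  · exact ⟨insert x C, mem_absorbAdded.2 (Or.inl rfl), mem_insert_of_mem ha,
      mem_insert_of_mem hb⟩
  · exact coversPair_absorbAdded_of_mem_pencil hx hC hab ha hb

theorem IsLinearFamily.pairwise_absorbAdded (hF : IsLinearFamily F) (hD : D ∈ F) (hx : x ∉ D) :
    (absorbAdded F D x : Set (Finset α)).Pairwise fun C C' ↦ #(C ∩ C') ≤ 1 := by
  have le_one_of_subset {s : Finset α} (c : α) (h : s ⊆ {c}) : #s ≤ 1 :=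
    (card_le_card h).trans_eq (card_singleton c)
  have hDx_erase {C₀} (h : C₀ ∈ thickPencil F D x) : #(insert x D ∩ C₀.erase x) ≤ 1 := by
    refine (card_le_card fun z hz ↦ ?_).trans
      (hF.card_inter_pencil hD hx (thickPencil_subset h)).le
    simp only [mem_inter, mem_insert, mem_erase] at hz ⊢
    exact ⟨hz.2.2, hz.1.resolve_left hz.2.1⟩
  have hDx_pair {w} (hw : w ∈ outerPoints F D x) : #(insert x D ∩ {x, w}) ≤ 1 := by
    refine le_one_of_subset x fun z hz ↦ ?_
    simp only [mem_inter, mem_insert, mem_singleton] at hz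
    rcases hz.2 with rfl | rfl
    · exact mem_singleton_self z
    · exact (notMem_of_mem_outerPoints hw (mem_insert.2 hz.1)).elim
  have herase_pair {C₀ : Finset α} {w : α} : #(C₀.erase x ∩ {x, w}) ≤ 1 := by
    refine le_one_of_subset w fun z hz ↦ ?_
    simp only [mem_inter, mem_erase, mem_insert, mem_singleton] at hz ⊢
    exact hz.2.resolve_left hz.1.1
  rintro C hC C' hC' hne
  rw [mem_coe, mem_absorbAdded] at hC hC'
  rcases hC with rfl | ⟨C₀, hC₀, rfl⟩ | ⟨w, hw, rfl⟩ <;>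
    rcases hC' with rfl | ⟨C₁, hC₁, rfl⟩ | ⟨w', hw', rfl⟩
  · exact (hne rfl).elim
  · exact hDx_erase hC₁
  · exact hDx_pair hw'
  · exact inter_comm (insert x D) _ ▸ hDx_erase hC₀
  · have hne' : C₀ ≠ C₁ := by rintro rfl; exact hne rfl
    exact (card_le_card (inter_subset_inter (erase_subset x C₀) (erase_subset x C₁))).trans
      (hF.card_inter_le_one (pencil_subset (thickPencil_subset hC₀))
        (pencil_subset (thickPencil_subset hC₁)) hne')
  · exact herase_pair
  · exact inter_comm (insert x D) _ ▸ hDx_pair hw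
  · exact inter_comm (C₁.erase x) _ ▸ herase_pair
  · refine le_one_of_subset x fun z hz ↦ ?_
    simp only [mem_inter, mem_insert, mem_singleton] at hz ⊢
    by_contra hzx
    rw [← hz.1.resolve_left hzx, ← hz.2.resolve_left hzx] at hne
    exact hne rfl

theorem IsLinearFamily.absorbPoint (hF : IsLinearFamily F) (hD : D ∈ F) (hx : x ∉ D) :
    IsLinearFamily (absorbPoint F D x) :=
  hF.sdiff_union (insert_subset hD pencil_subset)
    (fun _ _ hab ↦ hF.coversPair_absorbRemoved_iff hx hab) (hF.pairwise_absorbAdded hD hx)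

theorem two_le_card_of_mem_absorbAdded (hx : x ∉ D) (hD : D.Nonempty)
    (hC : C ∈ absorbAdded F D x) : 2 ≤ #C := by
  rcases mem_absorbAdded.1 hC with rfl | ⟨C₀, hC₀, rfl⟩ | ⟨w, hw, rfl⟩
  · rw [card_insert_of_notMem hx]
    exact Nat.succ_le_succ (card_pos.2 hD)
  · rw [mem_thickPencil] at hC₀
    rw [card_erase_of_mem (mem_of_mem_pencil hC₀.1)]
    omega
  · rw [card_pair ((mem_insert_self x D).ne_of_notMem (notMem_of_mem_outerPoints hw))]

theorem exists_superset_of_mem_absorbAdded (hC : C ∈ absorbAdded F D x)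
    (hCD : C ≠ insert x D) : ∃ C₀ ∈ F, C ⊆ C₀ := by
  rcases mem_absorbAdded.1 hC with rfl | ⟨C₀, hC₀, rfl⟩ | ⟨w, hw, rfl⟩
  · exact (hCD rfl).elim
  · exact ⟨C₀, pencil_subset (thickPencil_subset hC₀), erase_subset x C₀⟩
  · obtain ⟨C₀, hC₀, hwC₀, -⟩ := mem_outerPoints.1 hw
    exact ⟨C₀, pencil_subset (thickPencil_subset hC₀),
      insert_subset (mem_of_mem_pencil (thickPencil_subset hC₀)) (singleton_subset_iff.2 hwC₀)⟩

theorem card_outerPoints_add_two_mul_le (hx : x ∉ D) (hlargest : ∀ C ∈ F, #C ≤ #D) :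
    #(outerPoints F D x) + 2 * #(thickPencil F D x) ≤ #(thickPencil F D x) * #D := by
  have hC : ∀ C ∈ thickPencil F D x, #(C \ insert x D) + 2 ≤ #D := by
    intro C hC
    have hCP := thickPencil_subset hC
    obtain ⟨y, hyC, hyD⟩ := not_disjoint_iff.1 (mem_pencil.1 hCP).2.2
    have hxy : 2 ≤ #(C ∩ insert x D) := one_lt_card.2 ⟨x, by simp [mem_of_mem_pencil hCP], y,
      by simp [hyC, hyD], (hyD.ne_of_notMem hx).symm⟩
    have := card_sdiff_add_card_inter C (insert x D)
    have := hlargest C (pencil_subset hCP)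
    omega
  calc #(outerPoints F D x) + 2 * #(thickPencil F D x)
      ≤ ∑ C ∈ thickPencil F D x, (#(C \ insert x D) + 2) := by
        rw [sum_add_distrib, sum_const, smul_eq_mul, mul_comm]
        exact Nat.add_le_add_right card_biUnion_le _
    _ ≤ #(thickPencil F D x) * #D := by
        simpa using sum_le_sum hC

theorem card_outerPoints_add_le [Fintype α] (hx : x ∉ D) :
    #(outerPoints F D x) + #D + 1 ≤ Fintype.card α := by
  have hdisj : Disjoint (outerPoints F D x) (insert x D) :=
    disjoint_left.2 fun _ ↦ notMem_of_mem_outerPoints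
  have := card_le_univ (outerPoints F D x ∪ insert x D)
  rw [card_union_of_disjoint hdisj, card_insert_of_notMem hx] at this
  omega

theorem sum_absorbAdded {M : Type*} [AddCommMonoid M] (f : ℕ → M) (hx : x ∉ D) :
    ∑ C ∈ absorbAdded F D x, f #C =
      f (#D + 1) + ∑ C ∈ thickPencil F D x, f (#C - 1) + #(outerPoints F D x) • f 2 := by
  have hxC {C} (h : C ∈ thickPencil F D x) : x ∈ C := mem_of_mem_pencil (thickPencil_subset h)
  have hxw {w} (h : w ∈ outerPoints F D x) : x ≠ w :=
    (mem_insert_self x D).ne_of_notMem (notMem_of_mem_outerPoints h)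
  have hnot : insert x D ∉ (thickPencil F D x).image (·.erase x) ∪
      (outerPoints F D x).image ({x, ·}) := by
    simp only [mem_union, mem_image, not_or, not_exists, not_and]
    exact ⟨fun C _ h ↦ notMem_erase x C (h ▸ mem_insert_self x D),
      fun w hw h ↦ notMem_of_mem_outerPoints hw (h ▸ by simp)⟩
  have hdisj : Disjoint ((thickPencil F D x).image (·.erase x))
      ((outerPoints F D x).image ({x, ·})) := by
    simp only [disjoint_left, mem_image, not_exists, not_and, forall_exists_index, and_imp]
    rintro _ C _ rfl w _ h
    exact notMem_erase x C (h ▸ mem_insert_self x {w})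
  rw [absorbAdded, sum_insert hnot, sum_union hdisj, card_insert_of_notMem hx, add_assoc]
  congr 2
  · rw [sum_image fun C hC C' hC' h ↦ by rw [← insert_erase (hxC hC), h, insert_erase (hxC hC')]]
    exact sum_congr rfl fun C hC ↦ by rw [card_erase_of_mem (hxC hC)]
  · rw [sum_image fun w hw w' hw' h ↦ ?_, ← sum_const]
    · exact sum_congr rfl fun w hw ↦ by rw [card_pair (hxw hw)]
    · have : w ∈ ({x, w'} : Finset α) := h ▸ by simp
      simpa [(hxw hw).symm] using this

theorem sum_absorbRemoved {M : Type*} [AddCommMonoid M] (f : ℕ → M) (hx : x ∉ D)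
    (hF₂ : ∀ C ∈ F, 2 ≤ #C) :
    ∑ C ∈ absorbRemoved F D x, f #C =
      f #D + ∑ C ∈ thickPencil F D x, f #C + #(thinPencil F D x) • f 2 := by
  have hD : D ∉ pencil F D x := fun h ↦ hx (mem_of_mem_pencil h)
  rw [absorbRemoved, sum_insert hD, ← sum_filter_add_sum_filter_not _ (fun C ↦ 3 ≤ #C),
    add_assoc, ← sum_const]
  congr 2
  refine sum_congr rfl fun C hC ↦ ?_
  rw [thinPencil, mem_filter] at hC
  have := hF₂ C (pencil_subset hC.1)
  rw [show #C = 2 by omega]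

theorem sum_absorbPoint {M : Type*} [AddCommGroup M] (f : Finset α → M)
    (hF : IsLinearFamily F) (hD : D ∈ F) (hx : x ∉ D) (hF₂ : ∀ C ∈ F, 2 ≤ #C) :
    ∑ C ∈ absorbPoint F D x, f C =
      ∑ C ∈ F, f C - ∑ C ∈ absorbRemoved F D x, f C + ∑ C ∈ absorbAdded F D x, f C := by
  have hS : absorbRemoved F D x ⊆ F := insert_subset hD pencil_subset
  have hdisj := hF.disjoint_sdiff hS (fun _ _ hab ↦ (hF.coversPair_absorbRemoved_iff hx hab).2)
    fun C ↦ two_le_card_of_mem_absorbAdded hx (card_pos.1 (by have := hF₂ D hD; omega))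
  rw [absorbPoint, sum_union hdisj, ← sum_sdiff hS]
  abel

end Absorb

theorem div_lt_half_and_two_mul_one_sub_div_lt {S T N M : ℝ} (hM : 0 < M)
    (hhalf : 0 < M - 2 * N) (hmain : 0 < (T * (2 * S - 3) + 2) * N - (T * (S - 2) + 2) * M) :
    N / M < 1 / 2 ∧ 2 * (1 - N / M) < T * ((2 * S - 3) * (N / M) - (S - 2)) := by
  obtain ⟨a, rfl⟩ : ∃ a, N = a * M := ⟨N / M, by field_simp⟩
  rw [mul_div_cancel_right₀ a hM.ne']
  constructor
  · nlinarith
  · nlinarith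

theorem ERalpha_bounds {s t : ℕ} (hs : 3 ≤ s) (ht1 : s + 2 ≤ t) (ht2 : t ≤ 2 * s - 1) :
    ERalpha s t < 1 / 2 ∧ 2 * (1 - ERalpha s t) < t * EReta s t := by
  obtain ⟨u, w, rfl, rfl⟩ : ∃ u w : ℕ, s = u + w + 3 ∧ t = 2 * u + w + 5 :=
    ⟨t - s - 2, 2 * s - 1 - t, by omega, by omega⟩
  -- In these coordinates every polynomial inequality below has nonnegative coefficients.
  have hη : EReta (u + w + 3) (2 * u + w + 5) =
      (2 * ((u + w + 3 : ℕ) : ℝ) - 3) * ERalpha (u + w + 3) (2 * u + w + 5) -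
        (((u + w + 3 : ℕ) : ℝ) - 2) := by
    unfold EReta ERdelta; ring
  rw [hη]
  unfold ERalpha
  split_ifs <;> apply div_lt_half_and_two_mul_one_sub_div_lt <;> push_cast <;> ring_nf <;>
    positivity

theorem EReta_bounds {s t : ℕ} (hs : 3 ≤ s) (ht1 : s + 2 ≤ t) (ht2 : t ≤ 2 * s - 1) :
    0 < EReta s t ∧ EReta s t < 1 - ERalpha s t ∧ 2 * (1 - ERalpha s t) < t * EReta s t := by
  obtain ⟨hα, hη⟩ := ERalpha_bounds hs ht1 ht2
  have hS : (3 : ℝ) ≤ s := by exact_mod_cast hs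
  have hlt : EReta s t < 1 - ERalpha s t := by
    have : 1 - ERalpha s t - EReta s t = (s - 1) * (1 - 2 * ERalpha s t) := by
      unfold EReta ERdelta; ring
    nlinarith
  refine ⟨?_, hlt, hη⟩
  by_contra! h
  nlinarith [mul_nonpos_of_nonneg_of_nonpos (Nat.cast_nonneg (α := ℝ) t) h]

theorem absorb_gain_pos {a η : ℝ} {m k e d t : ℕ} (hη : 0 < η) (hηa : η < a)
    (hta : 2 * a < t * η) (hmk : m + k = d) (he : e + 2 * m ≤ m * d) (hed : e + d + 1 ≤ t)
    (htd : t ≤ 2 * d) : 0 < a * (m - 1) - η * (e - k) := by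
  rcases Nat.lt_or_ge m 2 with hm | hm
  · interval_cases m
    · obtain rfl : e = 0 := by omega
      have htd' : (t : ℝ) * η ≤ 2 * d * η :=
        mul_le_mul_of_nonneg_right (by exact_mod_cast htd) hη.le
      have hk : (k : ℝ) = d := by exact_mod_cast (by omega : k = d)
      push_cast
      nlinarith
    · have hek : (e : ℝ) + 1 ≤ k := by exact_mod_cast (by omega : e + 1 ≤ k)
      push_cast
      nlinarith
  · have hek : (e : ℝ) + 1 ≤ k + m := by exact_mod_cast (by omega : e + 1 ≤ k + m)
    have hm' : (2 : ℝ) ≤ m := by exact_mod_cast hm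
    nlinarith

-- `EReta s t` is minus the weight of a block of size `2`.
noncomputable def blockWeight (s t n : ℕ) : ℝ := ERdelta s t + n * (ERalpha s t - 1)

theorem blockWeight_sub_one {s t n : ℕ} (hn : 1 ≤ n) :
    blockWeight s t (n - 1) = blockWeight s t n + (1 - ERalpha s t) := by
  rw [blockWeight, blockWeight, Nat.cast_sub hn]
  ring

namespace ColourScheme

variable {s t : ℕ} (Q : ColourScheme s t) {D : Finset (Fin t)} {x : Fin t}

theorem isLinearFamily : IsLinearFamily Q.blocks := Q.existsUnique_block

theorem schemeValue_eq_sum_blockWeight :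
    schemeValue Q = t - 2 + EReta s t + ∑ C ∈ Q.blocks, blockWeight s t #C := by
  simp only [schemeValue, blockWeight, EReta, sum_add_distrib, sum_const, nsmul_eq_mul,
    ← sum_mul]
  ring

def absorb (hD : D ∈ Q.blocks) (hx : x ∉ D) (hDs : #D < s) : ColourScheme s t where
  blocks := absorbPoint Q.blocks D x
  two_le_card C hC := by
    rcases mem_union.1 hC with hC | hC
    · exact Q.two_le_card C (mem_sdiff.1 hC).1
    · exact two_le_card_of_mem_absorbAdded hx
        (card_pos.1 (by have := Q.two_le_card D hD; omega)) hC
  card_le_s C hC := by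
    rcases mem_union.1 hC with hC | hC
    · exact Q.card_le_s C (mem_sdiff.1 hC).1
    by_cases hCD : C = insert x D
    · rw [hCD, card_insert_of_notMem hx]
      omega
    · obtain ⟨C₀, hC₀, hCC₀⟩ := exists_superset_of_mem_absorbAdded hC hCD
      exact (card_le_card hCC₀).trans (Q.card_le_s C₀ hC₀)
  existsUnique_block := Q.isLinearFamily.absorbPoint hD hx

theorem schemeValue_absorb (hD : D ∈ Q.blocks) (hx : x ∉ D) (hDs : #D < s) :
    schemeValue (Q.absorb hD hx hDs) = schemeValue Q +
      (1 - ERalpha s t) * (#(thickPencil Q.blocks D x) - 1) -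
      EReta s t * (#(outerPoints Q.blocks D x) - #(thinPencil Q.blocks D x)) := by
  rw [schemeValue_eq_sum_blockWeight, schemeValue_eq_sum_blockWeight]
  change _ + ∑ C ∈ absorbPoint Q.blocks D x, _ = _
  rw [sum_absorbPoint _ Q.isLinearFamily hD hx Q.two_le_card, sum_absorbAdded _ hx,
    sum_absorbRemoved _ hx Q.two_le_card,
    sum_congr rfl fun C hC ↦ blockWeight_sub_one (by rw [mem_thickPencil] at hC; omega),
    sum_add_distrib]
  simp only [blockWeight, EReta, sum_const, nsmul_eq_mul]
  push_cast
  ring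

end ColourScheme

/-- **Lemma (contains).** Let `Q` be a colour scheme for `K_t` with parameter `s` of
maximal value, and suppose the largest block `D` of `Q` has size at least `t/2`. Then
`D` has size exactly `s`. -/
theorem largest_block_card_eq (s t : ℕ) (hs : 3 ≤ s) (ht1 : s + 2 ≤ t) (ht2 : t ≤ 2 * s - 1)
    (Q : ColourScheme s t)
    (hmax : ∀ Q' : ColourScheme s t, schemeValue Q' ≤ schemeValue Q)
    (D : Finset (Fin t)) (hD : D ∈ Q.blocks)
    (hlargest : ∀ D' ∈ Q.blocks, D'.card ≤ D.card)
    (hsize : (t : ℝ) / 2 ≤ (D.card : ℝ)) :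
    D.card = s := by
  by_contra hne
  have hDs : #D < s := (Q.card_le_s D hD).lt_of_ne hne
  obtain ⟨x, -, hx⟩ := exists_mem_notMem_of_card_lt_card (s := D) (t := univ)
    (by rw [card_univ, Fintype.card_fin]; omega)
  obtain ⟨hη, hηα, htη⟩ := EReta_bounds hs ht1 ht2
  have hgain := absorb_gain_pos hη hηα htη
    (by rw [card_thickPencil_add_card_thinPencil, Q.isLinearFamily.card_pencil hD hx])
    (card_outerPoints_add_two_mul_le hx hlargest)
    (by simpa using card_outerPoints_add_le (F := Q.blocks) hx)
    (by exact_mod_cast (by linarith : (t : ℝ) ≤ 2 * #D))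
  have := hmax (Q.absorb hD hx hDs)
  rw [Q.schemeValue_absorb hD hx hDs] at this
  linarith
end

section
/- Let s ≥ 3 and s+2 ≤ t ≤ 2s-1 be integers and suppose (s,t) is regular. Then v(Q_1) = 0 and v(Q_2) ≤ 0, i.e. t + (δ + s(α-1)) + (C(t,2) - C(s,2))(δ + 2(α-1)) - (δ + 2α) = 0 and t + (δ + s(α-1)) + (δ + (t-s+1)(α-1)) + (C(t,2) - C(s,2) - C(t-s+1,2))(δ + 2(α-1)) - (δ + 2α) ≤ 0, where C(a,2) = a(a-1)/2. -/
/-!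
Once `δ = s - (2s-1)α` is substituted, `v(Q₁)` is affine in `α` with root `N/D`, which is the
regular `α`. Substituting this root into `v(Q₂)` leaves `-(t-s-1) g(s, t-s) / D`; the denominator
`D` is positive and the quadratic `g` (`regularGap`) is nonnegative on the regular range.
-/

noncomputable def valueQ1 (s t α δ : ℝ) : ℝ :=
  t + (δ + s * (α - 1)) + (t * (t - 1) / 2 - s * (s - 1) / 2) * (δ + 2 * (α - 1)) - (δ + 2 * α)

noncomputable def valueQ2 (s t α δ : ℝ) : ℝ :=
  t + (δ + s * (α - 1)) + (δ + (t - s + 1) * (α - 1)) +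
    (t * (t - 1) / 2 - s * (s - 1) / 2 - (t - s + 1) * (t - s) / 2) * (δ + 2 * (α - 1)) -
    (δ + 2 * α)

def regularAlphaNum (s t : ℝ) : ℝ := (s - 2) * (t - s) * (t + s - 1) + 2 * t - 2 * s

def regularAlphaDen (s t : ℝ) : ℝ := (2 * s - 3) * (t - s) * (t + s - 1) - 2 * s + 4

noncomputable def regularAlpha (s t : ℝ) : ℝ := regularAlphaNum s t / regularAlphaDen s t

def regularGap (s u : ℝ) : ℝ := (u - 2) * s ^ 2 - (u ^ 2 + 3 * u - 6) * s + (2 * u ^ 2 + u - 4)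

section Real

variable {s t : ℝ}

lemma two_mul_valueQ1 (s t α : ℝ) :
    2 * valueQ1 s t α (s - (2 * s - 1) * α) = regularAlphaNum s t - α * regularAlphaDen s t := by
  unfold valueQ1 regularAlphaNum regularAlphaDen
  ring

lemma valueQ1_regularAlpha (hD : regularAlphaDen s t ≠ 0) :
    valueQ1 s t (regularAlpha s t) (s - (2 * s - 1) * regularAlpha s t) = 0 := by
  have h := two_mul_valueQ1 s t (regularAlpha s t)
  rw [regularAlpha, div_mul_cancel₀ _ hD, sub_self] at h
  simpa [regularAlpha] using h

lemma valueQ2_regularAlpha (hD : regularAlphaDen s t ≠ 0) :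
    valueQ2 s t (regularAlpha s t) (s - (2 * s - 1) * regularAlpha s t) =
      -((t - s - 1) * regularGap s (t - s)) / regularAlphaDen s t := by
  unfold valueQ2 regularGap regularAlpha
  field_simp
  unfold regularAlphaNum regularAlphaDen
  ring

lemma regularAlphaDen_pos (hs : 2 ≤ s) (hst : s + 1 ≤ t) : 0 < regularAlphaDen s t := by
  have h : 2 * s ≤ (t - s) * (t + s - 1) := by nlinarith
  unfold regularAlphaDen
  nlinarith [mul_le_mul_of_nonneg_left h (by linarith : (0 : ℝ) ≤ 2 * s - 3)]

lemma regularGap_nonneg {u : ℝ} (hs : 11 ≤ s) (hu : 3 ≤ u) (hus : u ≤ s - 4) :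
    0 ≤ regularGap s u := by
  unfold regularGap
  nlinarith [mul_nonneg (sub_nonneg.2 hs) (sub_nonneg.2 hu),
    mul_nonneg (sub_nonneg.2 hs) (sub_nonneg.2 hus),
    mul_nonneg (sub_nonneg.2 hu) (sub_nonneg.2 hus)]

end Real

namespace IsRegularPair

variable {s t : ℕ}

lemma bounds (h : IsRegularPair s t) : 10 ≤ s ∧ s + 3 ≤ t := by
  rcases h with ⟨_, _, _⟩ | ⟨rfl, rfl⟩ | ⟨rfl, rfl⟩ <;> omega

lemma ERalpha_eq (h : IsRegularPair s t) : ERalpha s t = regularAlpha s t := by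
  rw [ERalpha, if_pos h, regularAlpha, regularAlphaNum, regularAlphaDen]

lemma regularAlphaDen_pos (h : IsRegularPair s t) : 0 < regularAlphaDen s t := by
  obtain ⟨hs, hst⟩ := h.bounds
  exact _root_.regularAlphaDen_pos (by norm_cast; omega) (by norm_cast; omega)

lemma regularGap_nonneg (h : IsRegularPair s t) : 0 ≤ regularGap s ((t : ℝ) - s) := by
  rcases h with ⟨hs, hst, hts⟩ | ⟨rfl, rfl⟩ | ⟨rfl, rfl⟩
  · have hs' : (11 : ℝ) ≤ s := by exact_mod_cast hs
    have hst' : (s : ℝ) + 3 ≤ t := by exact_mod_cast hst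
    have hts' : (t : ℝ) + 4 ≤ 2 * s := by exact_mod_cast (by omega : t + 4 ≤ 2 * s)
    exact _root_.regularGap_nonneg hs' (by linarith) (by linarith)
  all_goals norm_num [regularGap]

end IsRegularPair

theorem extremal_scheme_regular_general (s t : ℕ) (hreg : IsRegularPair s t) :
    (t : ℝ) + (ERdelta s t + (s : ℝ) * (ERalpha s t - 1)) +
        ((t : ℝ) * ((t : ℝ) - 1) / 2 - (s : ℝ) * ((s : ℝ) - 1) / 2) *
          (ERdelta s t + 2 * (ERalpha s t - 1)) -
        (ERdelta s t + 2 * ERalpha s t) = 0 ∧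
    (t : ℝ) + (ERdelta s t + (s : ℝ) * (ERalpha s t - 1)) +
        (ERdelta s t + ((t : ℝ) - (s : ℝ) + 1) * (ERalpha s t - 1)) +
        ((t : ℝ) * ((t : ℝ) - 1) / 2 - (s : ℝ) * ((s : ℝ) - 1) / 2 -
            ((t : ℝ) - (s : ℝ) + 1) * ((t : ℝ) - (s : ℝ)) / 2) *
          (ERdelta s t + 2 * (ERalpha s t - 1)) -
        (ERdelta s t + 2 * ERalpha s t) ≤ 0 := by
  change valueQ1 s t (ERalpha s t) (ERdelta s t) = 0 ∧ valueQ2 s t (ERalpha s t) (ERdelta s t) ≤ 0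
  have hD := hreg.regularAlphaDen_pos
  have hst : (s : ℝ) + 3 ≤ t := by exact_mod_cast hreg.bounds.2
  have hts : (0 : ℝ) ≤ t - s - 1 := by linarith
  rw [ERdelta, hreg.ERalpha_eq, valueQ2_regularAlpha hD.ne']
  exact ⟨valueQ1_regularAlpha hD.ne',
    div_nonpos_of_nonpos_of_nonneg (neg_nonpos.2 (mul_nonneg hts hreg.regularGap_nonneg)) hD.le⟩

/-- **Lemma (extremal, regular case).** If `(s,t)` is regular, then `v(Q_1) = 0` and
`v(Q_2) ≤ 0`. -/
theorem extremal_scheme_regular (s t : ℕ) (hs : 3 ≤ s) (ht1 : s + 2 ≤ t)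
    (ht2 : t ≤ 2 * s - 1) (hreg : IsRegularPair s t) :
    (t : ℝ) + (ERdelta s t + (s : ℝ) * (ERalpha s t - 1)) +
        ((t : ℝ) * ((t : ℝ) - 1) / 2 - (s : ℝ) * ((s : ℝ) - 1) / 2) *
          (ERdelta s t + 2 * (ERalpha s t - 1)) -
        (ERdelta s t + 2 * ERalpha s t) = 0 ∧
    (t : ℝ) + (ERdelta s t + (s : ℝ) * (ERalpha s t - 1)) +
        (ERdelta s t + ((t : ℝ) - (s : ℝ) + 1) * (ERalpha s t - 1)) +
        ((t : ℝ) * ((t : ℝ) - 1) / 2 - (s : ℝ) * ((s : ℝ) - 1) / 2 -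
            ((t : ℝ) - (s : ℝ) + 1) * ((t : ℝ) - (s : ℝ)) / 2) *
          (ERdelta s t + 2 * (ERalpha s t - 1)) -
        (ERdelta s t + 2 * ERalpha s t) ≤ 0 :=
  extremal_scheme_regular_general s t hreg
end

section
/- Let s ≥ 3 and s+2 ≤ t ≤ 2s-1 be integers and suppose (s,t) is exceptional. Then v(Q_2) = 0 and v(Q_1) ≤ 0, i.e. t + (δ + s(α-1)) + (δ + (t-s+1)(α-1)) + (C(t,2) - C(s,2) - C(t-s+1,2))(δ + 2(α-1)) - (δ + 2α) = 0 and t + (δ + s(α-1)) + (C(t,2) - C(s,2))(δ + 2(α-1)) - (δ + 2α) ≤ 0, where C(a,2) = a(a-1)/2. -/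
/-!
With `δ = s - (2s-1)α`, the value `v(Q₂)` is affine in `α`, namely `N - αD` where `N / D` is the
exceptional formula for `α`; hence `v(Q₂) = 0`. The two schemes differ only in the block of size
`t-s+1`, so `v(Q₁) - v(Q₂)` is explicit, and at `α = N / D` it equals `-(t-s-1) q / (2D)` with
`q = (t-s)(2s-3) - (s-2)(t-s-2)(2s-1-t)`. Writing `a = t-s-2` and `b = 2s-1-t`, the inequality
`q ≥ 0` reads `(s-2)ab ≤ (a+2)(2s-3)`, which holds as soon as `a = 0` or `b ≤ 2`. The exceptional
pairs not covered by this have `s ≤ 10` and are checked one by one; for `s = 10` the inequality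
fails exactly at the regular pairs `t = 14, 15`.
-/

noncomputable section

def exceptionalAlphaNum (s t : ℝ) : ℝ := (s - 2) * (t - s) * (s - 1) + s - 1

def exceptionalAlphaDen (s t : ℝ) : ℝ := (2 * s - 3) * (t - s) * (s - 1) + 2 * s - t

def slackQ₁ (s t : ℝ) : ℝ := (t - s) * (2 * s - 3) - (s - 2) * (t - s - 2) * (2 * s - 1 - t)

def valueQ₁ (s t α δ : ℝ) : ℝ :=
  t + (δ + s * (α - 1)) + (t * (t - 1) / 2 - s * (s - 1) / 2) * (δ + 2 * (α - 1)) - (δ + 2 * α)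

def valueQ₂ (s t α δ : ℝ) : ℝ :=
  t + (δ + s * (α - 1)) + (δ + (t - s + 1) * (α - 1)) +
      (t * (t - 1) / 2 - s * (s - 1) / 2 - (t - s + 1) * (t - s) / 2) * (δ + 2 * (α - 1)) -
    (δ + 2 * α)

end

theorem valueQ₂_eq (s t α : ℝ) :
    valueQ₂ s t α (s - (2 * s - 1) * α) = exceptionalAlphaNum s t - α * exceptionalAlphaDen s t := by
  unfold valueQ₂ exceptionalAlphaNum exceptionalAlphaDen
  ring

theorem valueQ₂_eq_zero {s t α : ℝ}
    (hα : α * exceptionalAlphaDen s t = exceptionalAlphaNum s t) :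
    valueQ₂ s t α (s - (2 * s - 1) * α) = 0 := by
  rw [valueQ₂_eq, hα, sub_self]

theorem valueQ₁_sub_valueQ₂ (s t α δ : ℝ) :
    valueQ₁ s t α δ - valueQ₂ s t α δ =
      (t - s - 1) / 2 * ((t - s + 2) * δ + 2 * (t - s + 1) * (α - 1)) := by
  unfold valueQ₁ valueQ₂
  ring

theorem valueQ₁_mul_exceptionalAlphaDen {s t α : ℝ}
    (hα : α * exceptionalAlphaDen s t = exceptionalAlphaNum s t) :
    valueQ₁ s t α (s - (2 * s - 1) * α) * exceptionalAlphaDen s t =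
      -((t - s - 1) / 2 * slackQ₁ s t) := by
  rw [← sub_zero (valueQ₁ _ _ _ _), ← valueQ₂_eq_zero hα, valueQ₁_sub_valueQ₂]
  unfold slackQ₁ exceptionalAlphaNum exceptionalAlphaDen at *
  linear_combination (-(t - s - 1) / 2 * ((t - s + 2) * (2 * s - 1) - 2 * (t - s + 1))) * hα

theorem exceptionalAlphaDen_pos {s t : ℝ} (hs : 3 ≤ s) (ht : s + 2 ≤ t) :
    0 < exceptionalAlphaDen s t := by
  have hc : 1 ≤ (2 * s - 3) * (s - 1) := by nlinarith
  unfold exceptionalAlphaDen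
  nlinarith [mul_nonneg (by linarith : (0 : ℝ) ≤ t - s) (by linarith : 0 ≤ (2 * s - 3) * (s - 1) - 1)]

theorem slackQ₁_nonneg_of_two_mul_le {s t : ℝ} (hs : 2 ≤ s) (ht : s + 2 ≤ t) (hb : 2 * s ≤ t + 3) :
    0 ≤ slackQ₁ s t := by
  unfold slackQ₁
  nlinarith [mul_nonneg (mul_nonneg (by linarith : (0 : ℝ) ≤ s - 2) (by linarith : (0 : ℝ) ≤ t - s - 2))
    (by linarith : (0 : ℝ) ≤ t + 3 - 2 * s)]

theorem slackQ₁_nonneg_of_not_isRegularPair {s t : ℕ} (hs : 3 ≤ s) (ht : s + 2 ≤ t)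
    (hexc : ¬ IsRegularPair s t) : 0 ≤ slackQ₁ s t := by
  by_cases hb : 2 * s ≤ t + 3
  · exact slackQ₁_nonneg_of_two_mul_le (by exact_mod_cast hs.trans' (by norm_num))
      (by exact_mod_cast ht) (by exact_mod_cast hb)
  by_cases ha : t = s + 2
  · subst ha
    unfold slackQ₁
    have : (3 : ℝ) ≤ s := by exact_mod_cast hs
    push_cast
    ring_nf
    linarith
  have hs10 : s ≤ 10 := by unfold IsRegularPair at hexc; omega
  have htb : t < 2 * s - 3 := by omega
  revert hexc
  interval_cases s <;> interval_cases t <;> norm_num [IsRegularPair, slackQ₁]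

theorem extremal_scheme_exceptional_general (s t : ℕ) (hs : 3 ≤ s) (ht1 : s + 2 ≤ t)
    (hexc : ¬ IsRegularPair s t) :
    (t : ℝ) + (ERdelta s t + (s : ℝ) * (ERalpha s t - 1)) +
        (ERdelta s t + ((t : ℝ) - (s : ℝ) + 1) * (ERalpha s t - 1)) +
        ((t : ℝ) * ((t : ℝ) - 1) / 2 - (s : ℝ) * ((s : ℝ) - 1) / 2 -
            ((t : ℝ) - (s : ℝ) + 1) * ((t : ℝ) - (s : ℝ)) / 2) *
          (ERdelta s t + 2 * (ERalpha s t - 1)) -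
        (ERdelta s t + 2 * ERalpha s t) = 0 ∧
    (t : ℝ) + (ERdelta s t + (s : ℝ) * (ERalpha s t - 1)) +
        ((t : ℝ) * ((t : ℝ) - 1) / 2 - (s : ℝ) * ((s : ℝ) - 1) / 2) *
          (ERdelta s t + 2 * (ERalpha s t - 1)) -
        (ERdelta s t + 2 * ERalpha s t) ≤ 0 := by
  change valueQ₂ s t (ERalpha s t) (ERdelta s t) = 0 ∧ valueQ₁ s t (ERalpha s t) (ERdelta s t) ≤ 0
  have hD : 0 < exceptionalAlphaDen s t :=
    exceptionalAlphaDen_pos (by exact_mod_cast hs) (by exact_mod_cast ht1)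
  have hα : ERalpha s t * exceptionalAlphaDen s t = exceptionalAlphaNum s t := by
    rw [ERalpha, if_neg hexc]
    exact div_mul_cancel₀ _ hD.ne'
  have hm : (0 : ℝ) ≤ (t - s - 1) / 2 := by
    have : (s : ℝ) + 2 ≤ t := by exact_mod_cast ht1
    linarith
  refine ⟨valueQ₂_eq_zero hα, nonpos_of_mul_nonpos_left ?_ hD⟩
  rw [ERdelta, valueQ₁_mul_exceptionalAlphaDen hα, neg_nonpos]
  exact mul_nonneg hm (slackQ₁_nonneg_of_not_isRegularPair hs ht1 hexc)

/-- **Lemma (extremal, exceptional case).** If `(s,t)` is exceptional, then `v(Q_2) = 0`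
and `v(Q_1) ≤ 0`. -/
theorem extremal_scheme_exceptional (s t : ℕ) (hs : 3 ≤ s) (ht1 : s + 2 ≤ t)
    (ht2 : t ≤ 2 * s - 1) (hexc : ¬ IsRegularPair s t) :
    (t : ℝ) + (ERdelta s t + (s : ℝ) * (ERalpha s t - 1)) +
        (ERdelta s t + ((t : ℝ) - (s : ℝ) + 1) * (ERalpha s t - 1)) +
        ((t : ℝ) * ((t : ℝ) - 1) / 2 - (s : ℝ) * ((s : ℝ) - 1) / 2 -
            ((t : ℝ) - (s : ℝ) + 1) * ((t : ℝ) - (s : ℝ)) / 2) *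
          (ERdelta s t + 2 * (ERalpha s t - 1)) -
        (ERdelta s t + 2 * ERalpha s t) = 0 ∧
    (t : ℝ) + (ERdelta s t + (s : ℝ) * (ERalpha s t - 1)) +
        ((t : ℝ) * ((t : ℝ) - 1) / 2 - (s : ℝ) * ((s : ℝ) - 1) / 2) *
          (ERdelta s t + 2 * (ERalpha s t - 1)) -
        (ERdelta s t + 2 * ERalpha s t) ≤ 0 :=
  extremal_scheme_exceptional_general s t hs ht1 hexc
end

section
/- Let s ≥ 3 and s+2 ≤ t ≤ 2s-1 be integers. Then (t-s+1)η < δ if and only if (s,t) is regular. -/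
/-- The key integer polynomial criterion: `(t-s+1)η < δ` reduces to positivity of
`P = s²k - 2s² - sk² - 3sk + 6s + 2k² + k - 4` with `k = t - s`, and this holds
exactly for regular pairs. -/
lemma P_iff_regular (s t : ℕ) (hs : 3 ≤ s) (ht1 : s + 2 ≤ t) (ht2 : t ≤ 2 * s - 1) :
    (0 < (s:ℤ)^2*((t:ℤ)-s) - 2*(s:ℤ)^2 - (s:ℤ)*((t:ℤ)-s)^2 - 3*(s:ℤ)*((t:ℤ)-s)
        + 6*(s:ℤ) + 2*((t:ℤ)-s)^2 + ((t:ℤ)-s) - 4) ↔ IsRegularPair s t := by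
  constructor
  · intro h
    by_contra hreg
    rcases le_or_gt s 10 with hle | hgt
    · interval_cases s <;> interval_cases t <;> simp_all [IsRegularPair]
    · have h1 : (11:ℤ) ≤ (s:ℤ) := by exact_mod_cast hgt
      have hcase : t = s + 2 ∨ t = 2*s-3 ∨ t = 2*s-2 ∨ t = 2*s-1 ∨ (s+3 ≤ t ∧ t ≤ 2*s-4) := by
        omega
      rcases hcase with hc | hc | hc | hc | hc
      · have hc' : (t:ℤ) = (s:ℤ) + 2 := by omega
        rw [hc'] at h; nlinarith
      · have hc' : (t:ℤ) = 2*(s:ℤ) - 3 := by omega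
        rw [hc'] at h; nlinarith
      · have hc' : (t:ℤ) = 2*(s:ℤ) - 2 := by omega
        rw [hc'] at h; nlinarith
      · have hc' : (t:ℤ) = 2*(s:ℤ) - 1 := by omega
        rw [hc'] at h; nlinarith
      · exact hreg (Or.inl ⟨hgt, hc.1, hc.2⟩)
  · rintro (⟨h1, h2, h3⟩ | ⟨rfl, rfl⟩ | ⟨rfl, rfl⟩)
    · have h1' : (11:ℤ) ≤ (s:ℤ) := by exact_mod_cast h1
      have h2' : (3:ℤ) ≤ (t:ℤ) - s := by omega
      have h3' : (t:ℤ) - s ≤ (s:ℤ) - 4 := by omega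
      set S := (s:ℤ); set K := (t:ℤ) - s
      nlinarith [mul_nonneg (mul_nonneg (by linarith : (0:ℤ) ≤ S - 11)
          (by linarith : (0:ℤ) ≤ K - 3)) (by linarith : (0:ℤ) ≤ S - 4 - K),
        mul_nonneg (by linarith : (0:ℤ) ≤ S - 11) (by linarith : (0:ℤ) ≤ S - 4 - K),
        mul_nonneg (by linarith : (0:ℤ) ≤ K - 3) (by linarith : (0:ℤ) ≤ S - 4 - K),
        mul_nonneg (by linarith : (0:ℤ) ≤ S - 11) (by linarith : (0:ℤ) ≤ K - 3)]
    · norm_num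
    · norm_num

/-- **Lemma (app2(a)).** `(t-s+1)η < δ` if and only if `(s,t)` is regular. -/
theorem eta_ineq_iff_regular (s t : ℕ) (hs : 3 ≤ s) (ht1 : s + 2 ≤ t) (ht2 : t ≤ 2 * s - 1) :
    ((t : ℝ) - (s : ℝ) + 1) * EReta s t < ERdelta s t ↔ IsRegularPair s t := by
  have hS : (3:ℝ) ≤ (s:ℝ) := by exact_mod_cast hs
  have hT1 : (s:ℝ) + 2 ≤ (t:ℝ) := by exact_mod_cast ht1
  have hT2 : (t:ℝ) ≤ 2*(s:ℝ) - 1 := by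
    have h : (t:ℤ) ≤ 2*(s:ℤ) - 1 := by omega
    exact_mod_cast h
  set P : ℝ := (s:ℝ)^2*((t:ℝ)-(s:ℝ)) - 2*(s:ℝ)^2 - (s:ℝ)*((t:ℝ)-(s:ℝ))^2 - 3*(s:ℝ)*((t:ℝ)-(s:ℝ))
      + 6*(s:ℝ) + 2*((t:ℝ)-(s:ℝ))^2 + ((t:ℝ)-(s:ℝ)) - 4 with hPdef
  have hcast : (((s:ℤ)^2*((t:ℤ)-s) - 2*(s:ℤ)^2 - (s:ℤ)*((t:ℤ)-s)^2 - 3*(s:ℤ)*((t:ℤ)-s)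
        + 6*(s:ℤ) + 2*((t:ℤ)-s)^2 + ((t:ℤ)-s) - 4 : ℤ) : ℝ) = P := by
    rw [hPdef]; push_cast; ring
  have hPiff : (0 < P) ↔ IsRegularPair s t := by
    rw [← P_iff_regular s t hs ht1 ht2, ← hcast]
    exact Int.cast_pos
  unfold EReta ERdelta
  by_cases hreg : IsRegularPair s t
  · rw [ERalpha, if_pos hreg]
    simp only [hreg, iff_true]
    have h10 : (10:ℝ) ≤ (s:ℝ) := by
      have h : (10:ℕ) ≤ s := by rcases hreg with ⟨h1,_⟩|⟨h1,_⟩|⟨h1,_⟩ <;> omega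
      exact_mod_cast h
    have hT3 : (s:ℝ) + 3 ≤ (t:ℝ) := by
      have h : s + 3 ≤ t := by rcases hreg with ⟨_,h2,_⟩|⟨h1,h2⟩|⟨h1,h2⟩ <;> omega
      exact_mod_cast h
    have hD : 0 < (2*(s:ℝ) - 3)*((t:ℝ) - (s:ℝ))*((t:ℝ) + (s:ℝ) - 1) - 2*(s:ℝ) + 4 := by
      nlinarith [mul_pos (mul_pos (show (0:ℝ) < 2*(s:ℝ)-3 by linarith)
        (show (0:ℝ) < (t:ℝ)-(s:ℝ) by linarith)) (show (0:ℝ) < (t:ℝ)+(s:ℝ)-1 by linarith)]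
    have hP : 0 < P := hPiff.mpr hreg
    rw [← sub_neg]
    have hid : ((t:ℝ) - (s:ℝ) + 1) * (2 * (1 - (((s:ℝ) - 2)*((t:ℝ) - (s:ℝ))*((t:ℝ) + (s:ℝ) - 1) + 2*(t:ℝ) - 2*(s:ℝ)) / ((2*(s:ℝ) - 3)*((t:ℝ) - (s:ℝ))*((t:ℝ) + (s:ℝ) - 1) - 2*(s:ℝ) + 4)) -
          ((s:ℝ) - (2*(s:ℝ) - 1) * ((((s:ℝ) - 2)*((t:ℝ) - (s:ℝ))*((t:ℝ) + (s:ℝ) - 1) + 2*(t:ℝ) - 2*(s:ℝ)) / ((2*(s:ℝ) - 3)*((t:ℝ) - (s:ℝ))*((t:ℝ) + (s:ℝ) - 1) - 2*(s:ℝ) + 4)))) -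
          ((s:ℝ) - (2*(s:ℝ) - 1) * ((((s:ℝ) - 2)*((t:ℝ) - (s:ℝ))*((t:ℝ) + (s:ℝ) - 1) + 2*(t:ℝ) - 2*(s:ℝ)) / ((2*(s:ℝ) - 3)*((t:ℝ) - (s:ℝ))*((t:ℝ) + (s:ℝ) - 1) - 2*(s:ℝ) + 4)))
        = (-2*P) / ((2*(s:ℝ) - 3)*((t:ℝ) - (s:ℝ))*((t:ℝ) + (s:ℝ) - 1) - 2*(s:ℝ) + 4) := by
      rw [hPdef]
      obtain ⟨D, hDdef⟩ : ∃ D, D = (2*(s:ℝ) - 3)*((t:ℝ) - (s:ℝ))*((t:ℝ) + (s:ℝ) - 1) - 2*(s:ℝ) + 4 := ⟨_, rfl⟩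
      rw [← hDdef] at hD ⊢
      field_simp
      rw [hDdef]
      ring
    rw [hid]
    exact div_neg_of_neg_of_pos (by linarith) hD
  · rw [ERalpha, if_neg hreg]
    simp only [hreg, iff_false, not_lt]
    have hD : 0 < (2*(s:ℝ) - 3)*((t:ℝ) - (s:ℝ))*((s:ℝ) - 1) + 2*(s:ℝ) - (t:ℝ) := by
      nlinarith [mul_pos (mul_pos (show (0:ℝ) < 2*(s:ℝ)-3 by linarith)
        (show (0:ℝ) < (t:ℝ)-(s:ℝ) by linarith)) (show (0:ℝ) < (s:ℝ)-1 by linarith)]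
    have hP : P ≤ 0 := by
      by_contra h
      exact hreg (hPiff.mp (by linarith))
    rw [← sub_nonneg]
    have hid : ((t:ℝ) - (s:ℝ) + 1) * (2 * (1 - (((s:ℝ) - 2)*((t:ℝ) - (s:ℝ))*((s:ℝ) - 1) + (s:ℝ) - 1) / ((2*(s:ℝ) - 3)*((t:ℝ) - (s:ℝ))*((s:ℝ) - 1) + 2*(s:ℝ) - (t:ℝ))) -
          ((s:ℝ) - (2*(s:ℝ) - 1) * ((((s:ℝ) - 2)*((t:ℝ) - (s:ℝ))*((s:ℝ) - 1) + (s:ℝ) - 1) / ((2*(s:ℝ) - 3)*((t:ℝ) - (s:ℝ))*((s:ℝ) - 1) + 2*(s:ℝ) - (t:ℝ))))) -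
          ((s:ℝ) - (2*(s:ℝ) - 1) * ((((s:ℝ) - 2)*((t:ℝ) - (s:ℝ))*((s:ℝ) - 1) + (s:ℝ) - 1) / ((2*(s:ℝ) - 3)*((t:ℝ) - (s:ℝ))*((s:ℝ) - 1) + 2*(s:ℝ) - (t:ℝ))))
        = (-P) / ((2*(s:ℝ) - 3)*((t:ℝ) - (s:ℝ))*((s:ℝ) - 1) + 2*(s:ℝ) - (t:ℝ)) := by
      rw [hPdef]
      obtain ⟨D, hDdef⟩ : ∃ D, D = (2*(s:ℝ) - 3)*((t:ℝ) - (s:ℝ))*((s:ℝ) - 1) + 2*(s:ℝ) - (t:ℝ) := ⟨_, rfl⟩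
      rw [← hDdef] at hD ⊢
      field_simp
      rw [hDdef]
      ring
    rw [hid]
    exact div_nonneg (by linarith) hD.le
end

section
/- Let s ≥ 3 and s+2 ≤ t ≤ 2s-1 be integers. Then (t-s-1)η < δ, and moreover if t ≠ 2s-1 then (t-s)η < δ. -/
/-
Writing `α = N / D`, one has `η = E / D` and `δ = F / D` with `E = (2s-3)N - (s-2)D` and
`F = sD - (2s-1)N`, and in both branches of the definition of `α` the cubic terms cancel:
with `u = t - s`, the regular branch gives `E = 2((2s-3)u + (s-2)²)` and
`F - uE = 2(s-2)(u-1)(s-u)`, the exceptional one `E = (s-2)(t-1) + 1` and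
`F - uE = (u-1)((s-2)(s-1-u) - 1)`. Since `E > 0`, the inequality `Xη < δ` for `X ≤ u` follows
from `F - uE > 0`, which holds except for `u = s - 1` in the exceptional branch; there
`F - (u-1)E > 0` is checked directly.
-/

def regularNum (s t : ℝ) : ℝ := (s - 2) * (t - s) * (t + s - 1) + 2 * t - 2 * s

def regularDen (s t : ℝ) : ℝ := (2 * s - 3) * (t - s) * (t + s - 1) - 2 * s + 4

def exceptionalNum (s t : ℝ) : ℝ := (s - 2) * (t - s) * (s - 1) + s - 1

def exceptionalDen (s t : ℝ) : ℝ := (2 * s - 3) * (t - s) * (s - 1) + 2 * s - t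

lemma ERalpha_eq_of_isRegularPair {s t : ℕ} (h : IsRegularPair s t) :
    ERalpha s t = regularNum s t / regularDen s t :=
  if_pos h

lemma ERalpha_eq_of_not_isRegularPair {s t : ℕ} (h : ¬IsRegularPair s t) :
    ERalpha s t = exceptionalNum s t / exceptionalDen s t :=
  if_neg h

lemma mul_EReta_lt_ERdelta {s t : ℕ} {N D X : ℝ} (hα : ERalpha s t = N / D) (hD : 0 < D)
    (h : X * ((2 * s - 3) * N - (s - 2) * D) < s * D - (2 * s - 1) * N) :
    X * EReta s t < ERdelta s t := by
  have hη : EReta s t = ((2 * s - 3) * N - (s - 2) * D) / D := by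
    rw [EReta, ERdelta, hα]; field_simp; ring
  have hδ : ERdelta s t = (s * D - (2 * s - 1) * N) / D := by
    rw [ERdelta, hα]; field_simp
  rw [hη, hδ, ← mul_div_assoc]
  exact div_lt_div_of_pos_right h hD

section Regular

variable {s t : ℝ}

lemma regularDen_pos (hs : 2 ≤ s) (ht : s + 1 ≤ t) : 0 < regularDen s t := by
  unfold regularDen
  have hprod : 2 * s ≤ (t - s) * (t + s - 1) := by nlinarith
  nlinarith [mul_le_mul (by linarith : 1 ≤ 2 * s - 3) hprod (by linarith) (by linarith)]

lemma regular_etaNum (s t : ℝ) :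
    (2 * s - 3) * regularNum s t - (s - 2) * regularDen s t =
      2 * ((2 * s - 3) * (t - s) + (s - 2) ^ 2) := by
  unfold regularNum regularDen; ring

lemma regular_deltaNum (s t : ℝ) :
    s * regularDen s t - (2 * s - 1) * regularNum s t =
      (t - s) * (2 * ((2 * s - 3) * (t - s) + (s - 2) ^ 2)) +
        2 * (s - 2) * (t - s - 1) * (2 * s - t) := by
  unfold regularNum regularDen; ring

lemma regular_mul_etaNum_lt_deltaNum {X : ℝ} (hs : 2 < s) (ht₁ : s + 1 < t) (ht₂ : t < 2 * s)
    (hX : X ≤ t - s) :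
    X * ((2 * s - 3) * regularNum s t - (s - 2) * regularDen s t) <
      s * regularDen s t - (2 * s - 1) * regularNum s t := by
  rw [regular_etaNum, regular_deltaNum]
  have hE_nonneg : 0 ≤ 2 * ((2 * s - 3) * (t - s) + (s - 2) ^ 2) := by nlinarith
  have hgap : 0 < 2 * (s - 2) * (t - s - 1) * (2 * s - t) :=
    mul_pos (mul_pos (by linarith) (by linarith)) (by linarith)
  nlinarith [mul_le_mul_of_nonneg_right hX hE_nonneg]

end Regular

section Exceptional

variable {s t : ℝ}

lemma exceptionalDen_pos (hs : 2 ≤ s) (ht₁ : s + 1 ≤ t) (ht₂ : t ≤ 2 * s) :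
    0 < exceptionalDen s t := by
  unfold exceptionalDen
  nlinarith [mul_pos (mul_pos (by linarith : (0 : ℝ) < 2 * s - 3) (by linarith : 0 < t - s))
    (by linarith : (0 : ℝ) < s - 1)]

lemma exceptional_etaNum (s t : ℝ) :
    (2 * s - 3) * exceptionalNum s t - (s - 2) * exceptionalDen s t = (s - 2) * (t - 1) + 1 := by
  unfold exceptionalNum exceptionalDen; ring

lemma exceptional_deltaNum (s t : ℝ) :
    s * exceptionalDen s t - (2 * s - 1) * exceptionalNum s t =
      (t - s) * ((s - 2) * (t - 1) + 1) + (t - s - 1) * ((s - 2) * (2 * s - 1 - t) - 1) := by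
  unfold exceptionalNum exceptionalDen; ring

lemma exceptional_mul_etaNum_lt_deltaNum {X : ℝ} (hs : 3 ≤ s) (ht₁ : s + 1 ≤ t)
    (ht₂ : t ≤ 2 * s - 1) (hX : X ≤ t - s - 1) :
    X * ((2 * s - 3) * exceptionalNum s t - (s - 2) * exceptionalDen s t) <
      s * exceptionalDen s t - (2 * s - 1) * exceptionalNum s t := by
  rw [exceptional_etaNum, exceptional_deltaNum]
  have hE_nonneg : 0 ≤ (s - 2) * (t - 1) + 1 := by nlinarith
  have hcross : 0 ≤ (t - s - 1) * (s - 2) * (2 * s - 1 - t) :=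
    mul_nonneg (mul_nonneg (by linarith) (by linarith)) (by linarith)
  nlinarith [mul_le_mul_of_nonneg_right hX hE_nonneg]

lemma exceptional_mul_etaNum_lt_deltaNum_of_add_two_le {X : ℝ} (ht₁ : s + 2 ≤ t)
    (ht₂ : t + 2 ≤ 2 * s) (hX : X ≤ t - s) :
    X * ((2 * s - 3) * exceptionalNum s t - (s - 2) * exceptionalDen s t) <
      s * exceptionalDen s t - (2 * s - 1) * exceptionalNum s t := by
  rw [exceptional_etaNum, exceptional_deltaNum]
  have hE_nonneg : 0 ≤ (s - 2) * (t - 1) + 1 := by nlinarith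
  have hgap : 0 < (t - s - 1) * ((s - 2) * (2 * s - 1 - t) - 1) :=
    mul_pos (by linarith) (by nlinarith)
  nlinarith [mul_le_mul_of_nonneg_right hX hE_nonneg]

end Exceptional

/-- **Lemma (app2(b),(c)).** `(t-s-1)η < δ`, and if `t ≠ 2s-1` then `(t-s)η < δ`. -/
theorem eta_ineqs (s t : ℕ) (hs : 3 ≤ s) (ht1 : s + 2 ≤ t) (ht2 : t ≤ 2 * s - 1) :
    ((t : ℝ) - (s : ℝ) - 1) * EReta s t < ERdelta s t ∧
      (t ≠ 2 * s - 1 → ((t : ℝ) - (s : ℝ)) * EReta s t < ERdelta s t) := by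
  have hs' : (3 : ℝ) ≤ s := by exact_mod_cast hs
  have ht1' : (s : ℝ) + 2 ≤ t := by exact_mod_cast ht1
  have ht2' : (t : ℝ) + 1 ≤ 2 * s := by exact_mod_cast (by omega : t + 1 ≤ 2 * s)
  by_cases hreg : IsRegularPair s t
  · have hα := ERalpha_eq_of_isRegularPair hreg
    have hD : 0 < regularDen s t := regularDen_pos (by linarith) (by linarith)
    exact ⟨mul_EReta_lt_ERdelta hα hD
        (regular_mul_etaNum_lt_deltaNum (by linarith) (by linarith) (by linarith) (by linarith)),
      fun _ => mul_EReta_lt_ERdelta hα hD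
        (regular_mul_etaNum_lt_deltaNum (by linarith) (by linarith) (by linarith) le_rfl)⟩
  · have hα := ERalpha_eq_of_not_isRegularPair hreg
    have hD : 0 < exceptionalDen s t :=
      exceptionalDen_pos (by linarith) (by linarith) (by linarith)
    refine ⟨mul_EReta_lt_ERdelta hα hD
      (exceptional_mul_etaNum_lt_deltaNum hs' (by linarith) (by linarith) le_rfl), fun hne => ?_⟩
    have ht3 : (t : ℝ) + 2 ≤ 2 * s := by exact_mod_cast (by omega : t + 2 ≤ 2 * s)
    exact mul_EReta_lt_ERdelta hα hD
      (exceptional_mul_etaNum_lt_deltaNum_of_add_two_le ht1' ht3 le_rfl)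
end
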